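/- arXiv:2404.02881 — 5 statements merged into one kernel-verified Lean document; each statement's English description precedes it below -/
import Mathlib

section
/- Let A ∈ ℝ^{n×d} have full column rank, let p ≥ 2, let w ∈ ℝ^n_{>0}, and set α = ‖T_p(w) − σ(W^{1/2−1/p} A)‖₁. Then, in the Loewner order, (1−α) · AᵀW^{1−2/p}A ⪯ Aᵀ Diag(T_p(w))^{1−2/p} A ⪯ (1+α) · AᵀW^{1−2/p}A. -/
open Matrix BigOperators

/-- Leverage score of the `i`-th row of `B`: `σᵢ(B) = bᵢᵀ(BᵀB)⁻¹bᵢ = [B(BᵀB)⁻¹Bᵀ]ᵢᵢ`. -/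
noncomputable def lev {n d : ℕ} (B : Matrix (Fin n) (Fin d) ℝ) (i : Fin n) : ℝ :=
  (B * (Bᵀ * B)⁻¹ * Bᵀ) i i

/-- `dpow w c` is the diagonal matrix `W^c` with entries `wᵢ^c` (real powers). -/
noncomputable def dpow {n : ℕ} (w : Fin n → ℝ) (c : ℝ) : Matrix (Fin n) (Fin n) ℝ :=
  Matrix.diagonal (fun i => w i ^ c)

/-- The Lewis-weight fixed point map `T_p(w)ᵢ = wᵢ^{1-p/2} σᵢ(W^{1/2-1/p}A)^{p/2}`. -/
noncomputable def lewisT {n d : ℕ} (A : Matrix (Fin n) (Fin d) ℝ) (p : ℝ) (w : Fin n → ℝ)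
    (i : Fin n) : ℝ :=
  w i ^ (1 - p / 2) * lev (dpow w (1 / 2 - 1 / p) * A) i ^ (p / 2)

/-! ### Auxiliary lemmas -/

lemma lev_row {n d : ℕ} (B : Matrix (Fin n) (Fin d) ℝ) (i : Fin n) :
    lev B i = (fun j => B i j) ⬝ᵥ ((Bᵀ * B)⁻¹ *ᵥ fun j => B i j) := by
  simp only [lev, Matrix.mul_apply, Matrix.transpose_apply, dotProduct, Matrix.mulVec,
    Finset.sum_mul, Finset.mul_sum, dotProduct]
  rw [Finset.sum_comm]
  exact Finset.sum_congr rfl fun j _ => Finset.sum_congr rfl fun k _ => by ring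

/-- Cauchy–Schwarz for a symmetric positive-semidefinite bilinear form. -/
lemma cs_aux {m : ℕ} {S : Matrix (Fin m) (Fin m) ℝ} (hsym : Sᵀ = S)
    (hpos : ∀ y : Fin m → ℝ, 0 ≤ y ⬝ᵥ S *ᵥ y) (u v : Fin m → ℝ) :
    (u ⬝ᵥ S *ᵥ v) ^ 2 ≤ (u ⬝ᵥ S *ᵥ u) * (v ⬝ᵥ S *ᵥ v) := by
  have hsw : ∀ a b : Fin m → ℝ, a ⬝ᵥ S *ᵥ b = b ⬝ᵥ S *ᵥ a := by
    intro a b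
    rw [dotProduct_mulVec, ← Matrix.mulVec_transpose, hsym, dotProduct_comm]
  have h : ∀ t : ℝ, 0 ≤ (v ⬝ᵥ S *ᵥ v) * (t * t) + (2 * (u ⬝ᵥ S *ᵥ v)) * t + (u ⬝ᵥ S *ᵥ u) := by
    intro t
    have h0 := hpos (u + t • v)
    have hexp : (u + t • v) ⬝ᵥ S *ᵥ (u + t • v)
        = (v ⬝ᵥ S *ᵥ v) * (t * t) + (2 * (u ⬝ᵥ S *ᵥ v)) * t + (u ⬝ᵥ S *ᵥ u) := by
      simp only [mulVec_add, dotProduct_add, add_dotProduct, mulVec_smul,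
        dotProduct_smul, smul_dotProduct, smul_eq_mul, hsw v u]
      ring
    linarith [hexp ▸ h0]
  have hd := discrim_le_zero h
  rw [discrim] at hd
  nlinarith

/-- Nonnegativity of leverage scores, and the leverage-score bound
`(bᵢᵀx)² ≤ σᵢ · xᵀ(BᵀB)x`. -/
lemma lev_props {n d : ℕ} {B : Matrix (Fin n) (Fin d) ℝ}
    (hdet : IsUnit (Bᵀ * B).det) (i : Fin n) :
    0 ≤ lev B i ∧ ∀ x : Fin d → ℝ, ((B *ᵥ x) i) ^ 2 ≤ lev B i * (x ⬝ᵥ (Bᵀ * B) *ᵥ x) := by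
  set S := Bᵀ * B with hS
  have hsym : Sᵀ = S := by rw [hS, Matrix.transpose_mul, Matrix.transpose_transpose]
  have hpos : ∀ y : Fin d → ℝ, 0 ≤ y ⬝ᵥ S *ᵥ y := by
    intro y
    rw [hS, ← Matrix.mulVec_mulVec, dotProduct_mulVec, Matrix.vecMul_transpose]
    exact Finset.sum_nonneg fun j _ => mul_self_nonneg _
  have hinv : S⁻¹ᵀ = S⁻¹ := by rw [Matrix.transpose_nonsing_inv, hsym]
  have hSS : S⁻¹ * S = 1 := Matrix.nonsing_inv_mul S hdet
  have hSS' : S * S⁻¹ = 1 := Matrix.mul_nonsing_inv S hdet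
  set b : Fin d → ℝ := fun j => B i j with hb
  set u : Fin d → ℝ := S⁻¹ *ᵥ b with hu
  have move : ∀ z, u ⬝ᵥ z = b ⬝ᵥ (S⁻¹ *ᵥ z) := by
    intro z
    rw [hu, dotProduct_comm, dotProduct_mulVec, dotProduct_comm, ← Matrix.mulVec_transpose, hinv]
  have h2 : u ⬝ᵥ S *ᵥ u = lev B i := by
    rw [hu, Matrix.mulVec_mulVec, hSS', Matrix.one_mulVec, ← hu, move, lev_row]
  refine ⟨by rw [← h2]; exact hpos u, fun x => ?_⟩
  have h1 : u ⬝ᵥ S *ᵥ x = (B *ᵥ x) i := by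
    rw [move, Matrix.mulVec_mulVec, hSS, Matrix.one_mulVec]
    rfl
  calc ((B *ᵥ x) i) ^ 2 = (u ⬝ᵥ S *ᵥ x) ^ 2 := by rw [h1]
    _ ≤ (u ⬝ᵥ S *ᵥ u) * (x ⬝ᵥ S *ᵥ x) := cs_aux hsym hpos u x
    _ = lev B i * (x ⬝ᵥ S *ᵥ x) := by rw [h2]

lemma herm_sandwich {n d : ℕ} (A : Matrix (Fin n) (Fin d) ℝ) (Dv : Fin n → ℝ) :
    (Aᵀ * Matrix.diagonal Dv * A).IsHermitian := by
  unfold Matrix.IsHermitian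
  rw [conjTranspose_eq_transpose_of_trivial, Matrix.transpose_mul, Matrix.transpose_mul,
    Matrix.transpose_transpose, Matrix.diagonal_transpose, Matrix.mul_assoc]

lemma quad_diag {n d : ℕ} (A : Matrix (Fin n) (Fin d) ℝ) (Dv : Fin n → ℝ) (x : Fin d → ℝ) :
    x ⬝ᵥ (Aᵀ * Matrix.diagonal Dv * A) *ᵥ x = ∑ i, Dv i * ((A *ᵥ x) i) ^ 2 := by
  rw [← Matrix.mulVec_mulVec, ← Matrix.mulVec_mulVec, dotProduct_mulVec,
    Matrix.vecMul_transpose]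
  simp only [dotProduct, Matrix.mulVec_diagonal]
  exact Finset.sum_congr rfl fun i _ => by ring

lemma mulVec_eq_zero_of_rank {n d : ℕ} {A : Matrix (Fin n) (Fin d) ℝ} (hA : A.rank = d)
    {x : Fin d → ℝ} (hx : A *ᵥ x = 0) : x = 0 := by
  have h1 := LinearMap.finrank_range_add_finrank_ker A.mulVecLin
  rw [Matrix.rank] at hA
  rw [hA, Module.finrank_fintype_fun_eq_card, Fintype.card_fin] at h1
  have hker : LinearMap.ker A.mulVecLin = ⊥ := Submodule.finrank_eq_zero.mp (by omega)
  have : x ∈ LinearMap.ker A.mulVecLin := by simpa [LinearMap.mem_ker] using hx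
  simpa [hker] using this

/-- The key scalar identity: `|T^{1-2/p} - w^{1-2/p}|·σ = w^{1-2/p}·|T - σ|` where
`T = w^{1-p/2} σ^{p/2}`. -/
lemma key_eq {w σ p : ℝ} (hw : 0 < w) (hσ : 0 ≤ σ) (hp : 2 ≤ p) :
    |(w ^ (1 - p / 2) * σ ^ (p / 2)) ^ (1 - 2 / p) - w ^ (1 - 2 / p)| * σ
      = w ^ (1 - 2 / p) * |w ^ (1 - p / 2) * σ ^ (p / 2) - σ| := by
  have hp0 : (0 : ℝ) < p := by linarith
  rcases eq_or_lt_of_le hσ with h0 | hσp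
  · rw [← h0]
    have : (0:ℝ) ^ (p / 2) = 0 := Real.zero_rpow (by positivity)
    simp [this]
  · have key : (w ^ (1 - p / 2) * σ ^ (p / 2)) ^ (1 - 2 / p) * σ
        = w ^ (1 - 2 / p) * (w ^ (1 - p / 2) * σ ^ (p / 2)) := by
      rw [Real.mul_rpow (by positivity) (by positivity),
        ← Real.rpow_mul hw.le, ← Real.rpow_mul hσp.le]
      have e1 : (1 - p / 2) * (1 - 2 / p) = (1 - 2 / p) + (1 - p / 2) := by
        field_simp; ring
      have e2 : (p / 2) * (1 - 2 / p) + 1 = p / 2 := by field_simp; ring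
      rw [mul_assoc, ← Real.rpow_add_one hσp.ne', e2, e1, Real.rpow_add hw, mul_assoc]
    calc |(w ^ (1 - p / 2) * σ ^ (p / 2)) ^ (1 - 2 / p) - w ^ (1 - 2 / p)| * σ
        = |((w ^ (1 - p / 2) * σ ^ (p / 2)) ^ (1 - 2 / p) - w ^ (1 - 2 / p)) * σ| := by
          rw [abs_mul, abs_of_nonneg hσ]
      _ = |w ^ (1 - 2 / p) * (w ^ (1 - p / 2) * σ ^ (p / 2) - σ)| := by
          rw [sub_mul, key, mul_sub]
      _ = w ^ (1 - 2 / p) * |w ^ (1 - p / 2) * σ ^ (p / 2) - σ| := by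
          rw [abs_mul, abs_of_nonneg (le_of_lt (Real.rpow_pos_of_pos hw _))]

theorem loewner_bound_of_fixed_point_step {n d : ℕ} (A : Matrix (Fin n) (Fin d) ℝ)
    (hA : A.rank = d) (p : ℝ) (hp : 2 ≤ p) (w : Fin n → ℝ) (hw : ∀ i, 0 < w i)
    (α : ℝ) (hα : α = ∑ i, |lewisT A p w i - lev (dpow w (1 / 2 - 1 / p) * A) i|) :
    (Aᵀ * dpow (lewisT A p w) (1 - 2 / p) * A - (1 - α) • (Aᵀ * dpow w (1 - 2 / p) * A)).PosSemidef ∧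
    ((1 + α) • (Aᵀ * dpow w (1 - 2 / p) * A) - Aᵀ * dpow (lewisT A p w) (1 - 2 / p) * A).PosSemidef := by
  have hp0 : (0 : ℝ) < p := by linarith
  set B := dpow w (1 / 2 - 1 / p) * A with hB
  set M := Aᵀ * dpow w (1 - 2 / p) * A with hM
  set N := Aᵀ * dpow (lewisT A p w) (1 - 2 / p) * A with hN
  -- `BᵀB = M`
  have hdd : dpow w (1 / 2 - 1 / p) * dpow w (1 / 2 - 1 / p) = dpow w (1 - 2 / p) := by
    unfold dpow
    rw [Matrix.diagonal_mul_diagonal]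
    refine congrArg Matrix.diagonal (funext fun i => ?_)
    rw [← Real.rpow_add (hw i)]
    congr 1
    ring
  have hdt : (dpow w (1 / 2 - 1 / p))ᵀ = dpow w (1 / 2 - 1 / p) := Matrix.diagonal_transpose _
  have hBTB : Bᵀ * B = M := by
    rw [hB, hM, Matrix.transpose_mul, hdt, Matrix.mul_assoc,
      ← Matrix.mul_assoc (dpow w (1 / 2 - 1 / p)), hdd, ← Matrix.mul_assoc]
  -- quadratic forms
  have hquadM : ∀ x : Fin d → ℝ,
      x ⬝ᵥ M *ᵥ x = ∑ i, w i ^ (1 - 2 / p) * ((A *ᵥ x) i) ^ 2 := by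
    intro x
    rw [hM]
    exact quad_diag A _ x
  have hquadN : ∀ x : Fin d → ℝ,
      x ⬝ᵥ N *ᵥ x = ∑ i, lewisT A p w i ^ (1 - 2 / p) * ((A *ᵥ x) i) ^ 2 := by
    intro x
    rw [hN]
    exact quad_diag A _ x
  -- invertibility of `BᵀB`
  have hdet : IsUnit (Bᵀ * B).det := by
    rw [← Matrix.isUnit_iff_isUnit_det, ← Matrix.mulVec_injective_iff_isUnit]
    have hz : ∀ z : Fin d → ℝ, (Bᵀ * B) *ᵥ z = 0 → z = 0 := by
      intro z hz
      have hq : z ⬝ᵥ (Bᵀ * B) *ᵥ z = 0 := by rw [hz]; simp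
      rw [hBTB, hquadM z] at hq
      have hterm : ∀ i ∈ Finset.univ, (0:ℝ) ≤ w i ^ (1 - 2 / p) * ((A *ᵥ z) i) ^ 2 := by
        intro i _
        have := Real.rpow_pos_of_pos (hw i) (1 - 2 / p)
        positivity
      have hall := (Finset.sum_eq_zero_iff_of_nonneg hterm).mp hq
      apply mulVec_eq_zero_of_rank hA
      funext i
      have hi := hall i (Finset.mem_univ i)
      have hwq : (0:ℝ) < w i ^ (1 - 2 / p) := Real.rpow_pos_of_pos (hw i) _
      have h2 : ((A *ᵥ z) i) ^ 2 = 0 := by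
        rcases mul_eq_zero.mp hi with h | h
        · exact absurd h hwq.ne'
        · exact h
      simpa using (pow_eq_zero_iff two_ne_zero).mp h2
    intro z1 z2 h12
    have := hz (z1 - z2) (by rw [Matrix.mulVec_sub, h12, sub_self])
    exact sub_eq_zero.mp this
  -- main quadratic estimate
  have hmain : ∀ x : Fin d → ℝ,
      |x ⬝ᵥ N *ᵥ x - x ⬝ᵥ M *ᵥ x| ≤ α * (x ⬝ᵥ M *ᵥ x) ∧ 0 ≤ x ⬝ᵥ M *ᵥ x := by
    intro x
    have hQ0 : 0 ≤ x ⬝ᵥ M *ᵥ x := by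
      rw [hquadM]
      refine Finset.sum_nonneg fun i _ => ?_
      have := Real.rpow_pos_of_pos (hw i) (1 - 2 / p)
      positivity
    refine ⟨?_, hQ0⟩
    set Q := x ⬝ᵥ M *ᵥ x with hQ
    have hper : ∀ i : Fin n,
        |lewisT A p w i ^ (1 - 2 / p) * ((A *ᵥ x) i) ^ 2
          - w i ^ (1 - 2 / p) * ((A *ᵥ x) i) ^ 2|
          ≤ |lewisT A p w i - lev B i| * Q := by
      intro i
      obtain ⟨hσ0, hlev⟩ := lev_props hdet i
      have hlevx := hlev x
      rw [hBTB] at hlevx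
      have hBx : (B *ᵥ x) i = w i ^ (1 / 2 - 1 / p) * (A *ᵥ x) i := by
        rw [hB, ← Matrix.mulVec_mulVec]
        simp [dpow, Matrix.mulVec_diagonal]
      have hBx2 : ((B *ᵥ x) i) ^ 2 = w i ^ (1 - 2 / p) * ((A *ᵥ x) i) ^ 2 := by
        rw [hBx, mul_pow, pow_two (w i ^ (1 / 2 - 1 / p)), ← Real.rpow_add (hw i)]
        congr 2
        ring
      have h1 : w i ^ (1 - 2 / p) * ((A *ᵥ x) i) ^ 2 ≤ lev B i * Q := by
        rw [← hBx2]; exact hlevx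
      have hT : lewisT A p w i = w i ^ (1 - p / 2) * lev B i ^ (p / 2) := by
        rw [lewisT, hB]
      have hkey := key_eq (hw i) hσ0 hp
      rw [← hT] at hkey
      have hwq : (0:ℝ) < w i ^ (1 - 2 / p) := Real.rpow_pos_of_pos (hw i) _
      have habs : |lewisT A p w i ^ (1 - 2 / p) * ((A *ᵥ x) i) ^ 2
          - w i ^ (1 - 2 / p) * ((A *ᵥ x) i) ^ 2|
          = |lewisT A p w i ^ (1 - 2 / p) - w i ^ (1 - 2 / p)| * ((A *ᵥ x) i) ^ 2 := by
        rw [← sub_mul, abs_mul, abs_of_nonneg (sq_nonneg ((A *ᵥ x) i))]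
      rw [habs]
      have H := mul_le_mul_of_nonneg_left h1
        (abs_nonneg (lewisT A p w i ^ (1 - 2 / p) - w i ^ (1 - 2 / p)))
      nlinarith [hkey, hwq, H, abs_nonneg (lewisT A p w i - lev B i), hQ0]
    calc |x ⬝ᵥ N *ᵥ x - x ⬝ᵥ M *ᵥ x|
        = |∑ i, (lewisT A p w i ^ (1 - 2 / p) * ((A *ᵥ x) i) ^ 2
            - w i ^ (1 - 2 / p) * ((A *ᵥ x) i) ^ 2)| := by
          rw [hquadN, hquadM, Finset.sum_sub_distrib]
      _ ≤ ∑ i, |lewisT A p w i ^ (1 - 2 / p) * ((A *ᵥ x) i) ^ 2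
            - w i ^ (1 - 2 / p) * ((A *ᵥ x) i) ^ 2| := Finset.abs_sum_le_sum_abs _ _
      _ ≤ ∑ i, |lewisT A p w i - lev B i| * Q := Finset.sum_le_sum fun i _ => hper i
      _ = α * Q := by rw [hα, Finset.sum_mul]
  -- conclusion
  have hMh : M.IsHermitian := by rw [hM]; exact herm_sandwich A _
  have hNh : N.IsHermitian := by rw [hN]; exact herm_sandwich A _
  constructor
  · refine Matrix.PosSemidef.of_dotProduct_mulVec_nonneg ?_ fun x => ?_
    · unfold Matrix.IsHermitian
      rw [Matrix.conjTranspose_sub, Matrix.conjTranspose_smul, hMh.eq, hNh.eq]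
      norm_num
    · obtain ⟨habs, hQ0⟩ := hmain x
      obtain ⟨hl, hr⟩ := abs_le.mp habs
      have : (starRingEnd ℝ) (1 - α) = (1 - α) := by simp
      rw [star_trivial, Matrix.sub_mulVec, dotProduct_sub, Matrix.smul_mulVec,
        dotProduct_smul, smul_eq_mul]
      nlinarith
  · refine Matrix.PosSemidef.of_dotProduct_mulVec_nonneg ?_ fun x => ?_
    · unfold Matrix.IsHermitian
      rw [Matrix.conjTranspose_sub, Matrix.conjTranspose_smul, hMh.eq, hNh.eq]
      norm_num
    · obtain ⟨habs, hQ0⟩ := hmain x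
      obtain ⟨hl, hr⟩ := abs_le.mp habs
      rw [star_trivial, Matrix.sub_mulVec, dotProduct_sub, Matrix.smul_mulVec,
        dotProduct_smul, smul_eq_mul]
      nlinarith
end

section
/- Let A ∈ ℝ^{n×d} have full column rank, let p ≥ 2, let 0 < ε < 1, and suppose w ∈ ℝ^n_{>0} is a one-sided ε-approximate ℓ_p-Lewis weight of A. Then ‖T_p(w) − σ(W^{1/2−1/p}A)‖₁ ≤ 3ε (p/2 − 1)(1 + ε)^{p/2−1} d. -/
open Matrix BigOperators

/-- If `B` has full column rank, then `BᵀB` is positive definite. -/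
lemma posdef_aux {n d : ℕ} (B : Matrix (Fin n) (Fin d) ℝ) (hB : B.rank = d) :
    (Bᵀ * B).PosDef := by
  have hker : LinearMap.ker B.mulVecLin = ⊥ := by
    have h1 := LinearMap.finrank_range_add_finrank_ker B.mulVecLin
    rw [Module.finrank_fintype_fun_eq_card] at h1
    simp only [Fintype.card_fin] at h1
    have h2 : Module.finrank ℝ (LinearMap.range B.mulVecLin) = d := hB
    rw [h2] at h1
    have : Module.finrank ℝ (LinearMap.ker B.mulVecLin) = 0 := by omega
    exact Submodule.finrank_eq_zero.mp this
  refine PosDef.of_dotProduct_mulVec_pos (by simpa using isHermitian_conjTranspose_mul_self B) fun x hx => ?_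
  have hBx : B *ᵥ x ≠ 0 := by
    intro h
    apply hx
    have : x ∈ LinearMap.ker B.mulVecLin := h
    rwa [hker, Submodule.mem_bot] at this
  have : star x ⬝ᵥ (Bᵀ * B) *ᵥ x = (B *ᵥ x) ⬝ᵥ (B *ᵥ x) := by
    rw [← mulVec_mulVec, dotProduct_mulVec, star_trivial, vecMul_transpose]
  rw [this]
  have := dotProduct_star_self_pos_iff (v := B *ᵥ x) |>.mpr hBx
  simpa using this

/-- Leverage scores are nonnegative. -/
lemma lev_nonneg {n d : ℕ} (B : Matrix (Fin n) (Fin d) ℝ) (hB : B.rank = d) (i : Fin n) :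
    0 ≤ lev B i := by
  have hM := (posdef_aux B hB).inv
  have hPS := hM.posSemidef
  have h := hPS.dotProduct_mulVec_nonneg (fun k => B i k)
  have heq : lev B i = star (fun k => B i k) ⬝ᵥ (Bᵀ * B)⁻¹ *ᵥ (fun k => B i k) := by
    simp only [lev, Matrix.mul_apply, dotProduct, Matrix.mulVec, star_trivial,
      transpose_apply, Finset.sum_mul, Finset.mul_sum]
    rw [Finset.sum_comm]
    apply Finset.sum_congr rfl
    intro j _
    apply Finset.sum_congr rfl
    intro k _
    ring
  rw [heq]
  exact h

/-- Leverage scores of a full-column-rank matrix sum to `d`. -/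
lemma lev_sum {n d : ℕ} (B : Matrix (Fin n) (Fin d) ℝ) (hB : B.rank = d) :
    ∑ i, lev B i = d := by
  have hdet : IsUnit (Bᵀ * B).det :=
    (isUnit_iff_isUnit_det _).mp (posdef_aux B hB).isUnit
  have h1 : ∑ i, lev B i = Matrix.trace (B * (Bᵀ * B)⁻¹ * Bᵀ) := by
    simp [lev, Matrix.trace, Matrix.diag]
  rw [h1, Matrix.mul_assoc, trace_mul_comm, Matrix.mul_assoc,
    Matrix.nonsing_inv_mul _ hdet, trace_one]
  simp

/-- Bernoulli-type inequality: `(1+ε)^u - 1 ≤ u ε (1+ε)^u` for `u ≥ 0`, `ε > 0`. -/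
lemma bern2 {u ε : ℝ} (hu : 0 ≤ u) (hε : 0 < ε) :
    (1 + ε) ^ u - 1 ≤ u * ε * (1 + ε) ^ u := by
  have h1ε : (0:ℝ) < 1 + ε := by linarith
  have hpow1 : (1:ℝ) ≤ (1 + ε) ^ u := Real.one_le_rpow (by linarith) hu
  rcases le_or_gt u 1 with hu1 | hu1
  · have h := rpow_one_add_le_one_add_mul_self (s := ε) (by linarith) hu hu1
    nlinarith [mul_nonneg (mul_nonneg hu hε.le) (sub_nonneg.mpr hpow1)]
  · set x : ℝ := -ε / (1 + ε) with hx
    have hx1 : -1 ≤ x := by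
      rw [hx, neg_div, neg_le_neg_iff]
      rw [div_le_one h1ε]; linarith
    have hb := one_add_mul_self_le_rpow_one_add hx1 hu1.le
    have hxe : 1 + x = (1 + ε)⁻¹ := by
      rw [hx]; field_simp; ring
    rw [hxe, ← Real.rpow_neg_one (1+ε), ← Real.rpow_mul h1ε.le] at hb
    rw [neg_one_mul, Real.rpow_neg h1ε.le] at hb
    have hEpos : (0:ℝ) < (1 + ε) ^ u := Real.rpow_pos_of_pos h1ε u
    have hmul : (1 + u * x) * (1 + ε) ^ u ≤ 1 := by
      calc (1 + u * x) * (1 + ε) ^ u ≤ ((1 + ε) ^ u)⁻¹ * (1 + ε) ^ u :=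
            mul_le_mul_of_nonneg_right hb hEpos.le
        _ = 1 := inv_mul_cancel₀ hEpos.ne'
    have hxge : -ε ≤ x := by
      rw [hx, neg_div, neg_le_neg_iff, div_le_iff₀ h1ε]
      nlinarith
    have h2 : (1 - u * ε) * (1 + ε) ^ u ≤ 1 := by
      refine le_trans (mul_le_mul_of_nonneg_right ?_ hEpos.le) hmul
      nlinarith
    nlinarith

/-- Key pointwise bound. -/
lemma key_pointwise {q w s ε : ℝ} (hq : 1 ≤ q) (hw : 0 < w) (hs : 0 ≤ s) (hε : 0 < ε)
    (hle : s ≤ (1 + ε) * w) :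
    |w ^ (1 - q) * s ^ q - s| ≤
      (q - 1) * max (w - s) 0 + (q - 1) * ε * (1 + ε) ^ (q - 1) * s := by
  have h1ε : (0:ℝ) < 1 + ε := by linarith
  set t : ℝ := s / w with htdef
  have ht0 : 0 ≤ t := div_nonneg hs hw.le
  have hts : s = t * w := by rw [htdef]; field_simp
  have htle : t ≤ 1 + ε := by rw [htdef, div_le_iff₀ hw]; linarith
  have hEpos : (0:ℝ) < (1 + ε) ^ (q - 1) := Real.rpow_pos_of_pos h1ε _
  have hexpr : w ^ (1 - q) * s ^ q = t ^ q * w := by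
    rw [hts, Real.mul_rpow ht0 hw.le]
    rw [show w ^ (1 - q) * (t ^ q * w ^ q) = t ^ q * (w ^ (1 - q) * w ^ q) by ring,
      ← Real.rpow_add hw, show 1 - q + q = 1 by ring, Real.rpow_one]
  rw [hexpr, hts]
  have hterm2 : 0 ≤ (q - 1) * ε * (1 + ε) ^ (q - 1) * (t * w) := by
    exact mul_nonneg (mul_nonneg (mul_nonneg (by linarith) hε.le) hEpos.le)
      (mul_nonneg ht0 hw.le)
  rcases le_or_gt t 1 with ht1 | ht1
  · have htq : t ^ q ≤ t := by
      rcases eq_or_lt_of_le ht0 with h0 | h0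
      · rw [← h0, Real.zero_rpow (by linarith)]
      · calc t ^ q ≤ t ^ (1:ℝ) := Real.rpow_le_rpow_of_exponent_ge h0 ht1 hq
          _ = t := Real.rpow_one t
    have hbern : 1 + q * (t - 1) ≤ t ^ q := by
      have := one_add_mul_self_le_rpow_one_add (s := t - 1) (by linarith) hq
      simpa using this
    have habs : |t ^ q * w - t * w| = (t - t ^ q) * w := by
      rw [abs_of_nonpos (by nlinarith)]; ring
    rw [habs]
    have h1 : (t - t ^ q) * w ≤ (q - 1) * ((1 - t) * w) := by
      have : t - t ^ q ≤ (q - 1) * (1 - t) := by nlinarith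
      calc (t - t ^ q) * w ≤ ((q - 1) * (1 - t)) * w :=
            mul_le_mul_of_nonneg_right this hw.le
        _ = (q - 1) * ((1 - t) * w) := by ring
    have h2 : (1 - t) * w ≤ max (w - t * w) 0 := by
      refine le_max_of_le_left ?_; nlinarith
    have hq1 : (0:ℝ) ≤ q - 1 := by linarith
    nlinarith [mul_le_mul_of_nonneg_left h2 hq1]
  · have htpos : (0:ℝ) < t := by linarith
    have htq : t ≤ t ^ q := by
      calc t = t ^ (1:ℝ) := (Real.rpow_one t).symm
        _ ≤ t ^ q := Real.rpow_le_rpow_of_exponent_le ht1.le hq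
    have hsplit : t ^ q = t * t ^ (q - 1) := by
      have h := Real.rpow_add htpos 1 (q - 1)
      rw [Real.rpow_one, show (1:ℝ) + (q - 1) = q by ring] at h
      exact h
    have hle2 : t ^ (q - 1) ≤ (1 + ε) ^ (q - 1) :=
      Real.rpow_le_rpow ht0 htle (by linarith)
    have hb := bern2 (u := q - 1) (by linarith) hε
    have habs : |t ^ q * w - t * w| = (t ^ q - t) * w := by
      rw [abs_of_nonneg (by nlinarith)]; ring
    rw [habs]
    have hkey : (t ^ q - t) * w ≤ (q - 1) * ε * (1 + ε) ^ (q - 1) * (t * w) := by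
      rw [hsplit]
      have h3 : t ^ (q - 1) - 1 ≤ (q - 1) * ε * (1 + ε) ^ (q - 1) := by linarith
      have h4 : t * t ^ (q - 1) - t = t * (t ^ (q - 1) - 1) := by ring
      rw [h4]
      have h5 : t * (t ^ (q - 1) - 1) ≤ t * ((q - 1) * ε * (1 + ε) ^ (q - 1)) :=
        mul_le_mul_of_nonneg_left h3 htpos.le
      calc t * (t ^ (q - 1) - 1) * w ≤ t * ((q - 1) * ε * (1 + ε) ^ (q - 1)) * w :=
            mul_le_mul_of_nonneg_right h5 hw.le
        _ = (q - 1) * ε * (1 + ε) ^ (q - 1) * (t * w) := by ring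
    have : (0:ℝ) ≤ (q - 1) * max (w - t * w) 0 :=
      mul_nonneg (by linarith) (le_max_right _ _)
    linarith

theorem l1_dist_lewisT_of_one_sided {n d : ℕ} (A : Matrix (Fin n) (Fin d) ℝ)
    (hA : A.rank = d) (p : ℝ) (hp : 2 ≤ p) (ε : ℝ) (hε : 0 < ε) (hε1 : ε < 1)
    (w : Fin n → ℝ) (hw : ∀ i, 0 < w i)
    (hone : ∀ i, lev (dpow w (1 / 2 - 1 / p) * A) i ≤ (1 + ε) * w i)
    (hsum : ∑ i, |w i| ≤ (1 + ε) * d) :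
    ∑ i, |lewisT A p w i - lev (dpow w (1 / 2 - 1 / p) * A) i| ≤
      3 * ε * (p / 2 - 1) * (1 + ε) ^ (p / 2 - 1) * d := by
  set B : Matrix (Fin n) (Fin d) ℝ := dpow w (1 / 2 - 1 / p) * A with hBdef
  have hBrank : B.rank = d := by
    rw [hBdef]
    have hdet : IsUnit (dpow w (1 / 2 - 1 / p)).det := by
      rw [dpow, Matrix.det_diagonal]
      apply IsUnit.mk0
      exact Finset.prod_ne_zero_iff.mpr fun i _ =>
        (Real.rpow_pos_of_pos (hw i) _).ne'
    rw [Matrix.rank_mul_eq_right_of_isUnit_det _ _ hdet, hA]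
  have hσ0 : ∀ i, 0 ≤ lev B i := lev_nonneg B hBrank
  have hσsum : ∑ i, lev B i = d := lev_sum B hBrank
  have hwsum : ∑ i, w i ≤ (1 + ε) * d := by
    have : ∑ i, w i = ∑ i, |w i| :=
      Finset.sum_congr rfl fun i _ => (abs_of_pos (hw i)).symm
    rw [this]; exact hsum
  have hq : (1:ℝ) ≤ p / 2 := by linarith
  have h1ε : (0:ℝ) < 1 + ε := by linarith
  have hEpos : (0:ℝ) < (1 + ε) ^ (p / 2 - 1) := Real.rpow_pos_of_pos h1ε _
  have hE1 : (1:ℝ) ≤ (1 + ε) ^ (p / 2 - 1) := Real.one_le_rpow (by linarith) (by linarith)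
  have hd0 : (0:ℝ) ≤ (d:ℝ) := Nat.cast_nonneg d
  have step1 : ∑ i, |lewisT A p w i - lev B i| ≤
      ∑ i, ((p / 2 - 1) * max (w i - lev B i) 0
        + (p / 2 - 1) * ε * (1 + ε) ^ (p / 2 - 1) * lev B i) := by
    apply Finset.sum_le_sum
    intro i _
    have := key_pointwise (q := p / 2) (w := w i) (s := lev B i) (ε := ε)
      hq (hw i) (hσ0 i) hε (hone i)
    simpa [lewisT, hBdef] using this
  have step2 : ∑ i, ((p / 2 - 1) * max (w i - lev B i) 0
        + (p / 2 - 1) * ε * (1 + ε) ^ (p / 2 - 1) * lev B i)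
      = (p / 2 - 1) * (∑ i, max (w i - lev B i) 0)
        + (p / 2 - 1) * ε * (1 + ε) ^ (p / 2 - 1) * (∑ i, lev B i) := by
    rw [Finset.sum_add_distrib, ← Finset.mul_sum, ← Finset.mul_sum]
  have hmaxsum : ∑ i, max (w i - lev B i) 0 ≤ 2 * ε * d := by
    have hpt : ∀ i ∈ Finset.univ, max (w i - lev B i) 0 ≤ (w i - lev B i) + ε * lev B i := by
      intro i _
      apply max_le
      · nlinarith [mul_nonneg hε.le (hσ0 i)]
      · rcases le_total (lev B i) (w i) with h | h
        · nlinarith [mul_nonneg hε.le (hσ0 i)]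
        · nlinarith [hone i, (hw i).le]
    calc ∑ i, max (w i - lev B i) 0 ≤ ∑ i, ((w i - lev B i) + ε * lev B i) :=
          Finset.sum_le_sum hpt
      _ = (∑ i, w i) - (∑ i, lev B i) + ε * (∑ i, lev B i) := by
          rw [Finset.sum_add_distrib, Finset.sum_sub_distrib, ← Finset.mul_sum]
      _ = (∑ i, w i) - d + ε * d := by rw [hσsum]
      _ ≤ 2 * ε * d := by linarith
  calc ∑ i, |lewisT A p w i - lev B i|
      ≤ (p / 2 - 1) * (∑ i, max (w i - lev B i) 0)
        + (p / 2 - 1) * ε * (1 + ε) ^ (p / 2 - 1) * (∑ i, lev B i) := by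
        rw [← step2]; exact step1
    _ ≤ (p / 2 - 1) * (2 * ε * d) + (p / 2 - 1) * ε * (1 + ε) ^ (p / 2 - 1) * d := by
        rw [hσsum]
        exact add_le_add_left (mul_le_mul_of_nonneg_left hmaxsum (by linarith)) _
    _ ≤ 3 * ε * (p / 2 - 1) * (1 + ε) ^ (p / 2 - 1) * d := by
        nlinarith [mul_nonneg (mul_nonneg (mul_nonneg (show (0:ℝ) ≤ p / 2 - 1 by linarith)
          hε.le) hd0) (sub_nonneg.mpr hE1)]
end

section
/- Let A ∈ ℝ^{n×d} have full column rank, let p ≥ 2, let 0 < ε < 1, and suppose w ∈ ℝ^n_{>0} is a one-sided ε-approximate ℓ_p-Lewis weight of A. Set v = T_p(w), i.e., v_i = w_i^{1−p/2} σ_i(W^{1/2−1/p}A)^{p/2}, and α = 3ε (p/2 − 1)(1 + ε)^{p/2−1} d. Then for every i ∈ [n], (1−α) σ_i(V^{1/2−1/p}A) ≤ v_i ≤ (1+α) σ_i(V^{1/2−1/p}A), where V = Diag(v). In other words, one fixed-point iteration turns a one-sided ε-approximation into a two-sided α-approximation of the ℓ_p-Lewis weights of A. -/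
open Matrix BigOperators

variable {n d : ℕ}

def rw' (A : Matrix (Fin n) (Fin d) ℝ) (i : Fin n) : Fin d → ℝ := fun j => A i j

noncomputable def Gm (A : Matrix (Fin n) (Fin d) ℝ) (m : Fin n → ℝ) : Matrix (Fin d) (Fin d) ℝ :=
  Aᵀ * Matrix.diagonal m * A

noncomputable def tau (A : Matrix (Fin n) (Fin d) ℝ) (m : Fin n → ℝ) (i : Fin n) : ℝ :=
  rw' A i ⬝ᵥ (Gm A m)⁻¹ *ᵥ rw' A i

lemma quadG (A : Matrix (Fin n) (Fin d) ℝ) (m : Fin n → ℝ) (x : Fin d → ℝ) :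
    x ⬝ᵥ (Gm A m) *ᵥ x = ∑ i, m i * ((A *ᵥ x) i)^2 := by
  unfold Gm
  rw [← mulVec_mulVec, ← mulVec_mulVec, dotProduct_mulVec, vecMul_transpose]
  simp only [dotProduct, mulVec_diagonal]
  exact Finset.sum_congr rfl fun i _ => by ring

lemma hermG (A : Matrix (Fin n) (Fin d) ℝ) (m : Fin n → ℝ) : (Gm A m).IsHermitian := by
  unfold Gm Matrix.IsHermitian
  rw [conjTranspose_mul, conjTranspose_mul,
    conjTranspose_eq_transpose_of_trivial, conjTranspose_eq_transpose_of_trivial,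
    conjTranspose_eq_transpose_of_trivial,
    diagonal_transpose, transpose_transpose, Matrix.mul_assoc]

variable {n d : ℕ}

lemma inj_of_rank (A : Matrix (Fin n) (Fin d) ℝ) (hA : A.rank = d) :
    ∀ x : Fin d → ℝ, A *ᵥ x = 0 → x = 0 := by
  intro x hx
  have h := LinearMap.finrank_range_add_finrank_ker A.mulVecLin
  rw [show Module.finrank ℝ (LinearMap.range A.mulVecLin) = A.rank from rfl, hA,
    Module.finrank_pi] at h
  simp only [Fintype.card_fin] at h
  have hker : Module.finrank ℝ (LinearMap.ker A.mulVecLin) = 0 := by omega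
  have : LinearMap.ker A.mulVecLin = ⊥ := Submodule.finrank_eq_zero.mp hker
  have hx' : x ∈ LinearMap.ker A.mulVecLin := by
    simpa [LinearMap.mem_ker, Matrix.mulVecLin_apply] using hx
  rw [this] at hx'
  simpa using hx'

lemma vecMul_symm {d : ℕ} {S : Matrix (Fin d) (Fin d) ℝ} (h : Sᵀ = S) (u : Fin d → ℝ) :
    u ᵥ* S = S *ᵥ u := by
  conv_lhs => rw [← h]
  exact vecMul_transpose S u

open scoped MatrixOrder in
lemma csPSD {d : ℕ} {M : Matrix (Fin d) (Fin d) ℝ} (hM : M.PosSemidef) (a b : Fin d → ℝ) :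
    (a ⬝ᵥ M *ᵥ b)^2 ≤ (a ⬝ᵥ M *ᵥ a) * (b ⬝ᵥ M *ᵥ b) := by
  have hS : CFC.sqrt M * CFC.sqrt M = M := CFC.sqrt_mul_sqrt_self M hM.nonneg
  have hSt : (CFC.sqrt M)ᵀ = CFC.sqrt M := by
    rw [← conjTranspose_eq_transpose_of_trivial]; exact (CFC.sqrt_nonneg M).posSemidef.isHermitian
  have key : ∀ u z : Fin d → ℝ, u ⬝ᵥ M *ᵥ z = (CFC.sqrt M *ᵥ u) ⬝ᵥ (CFC.sqrt M *ᵥ z) := by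
    intro u z
    conv_lhs => rw [← hS]
    rw [← mulVec_mulVec, dotProduct_mulVec, vecMul_symm hSt]
  rw [key a b, key a a, key b b]
  have := Finset.sum_mul_sq_le_sq_mul_sq Finset.univ (CFC.sqrt M *ᵥ a) (CFC.sqrt M *ᵥ b)
  simpa [dotProduct, pow_two] using this
lemma posdefG (A : Matrix (Fin n) (Fin d) ℝ) (hker : ∀ x : Fin d → ℝ, A *ᵥ x = 0 → x = 0)
    (m : Fin n → ℝ) (h0 : ∀ i, 0 ≤ m i) (hpos : ∀ i, rw' A i ≠ 0 → 0 < m i) :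
    (Gm A m).PosDef := by
  refine Matrix.PosDef.of_dotProduct_mulVec_pos (hermG A m) fun x hx => ?_
  have hsx : star x = x := by funext i; simp
  rw [hsx, quadG]
  have hAx : A *ᵥ x ≠ 0 := fun h => hx (hker x h)
  obtain ⟨i, hi⟩ : ∃ i, (A *ᵥ x) i ≠ 0 := by
    by_contra h
    push_neg at h
    exact hAx (funext h)
  have hri : rw' A i ≠ 0 := by
    intro h
    apply hi
    show (fun j => A i j) ⬝ᵥ x = 0
    rw [show (fun j => A i j) = rw' A i from rfl, h, zero_dotProduct]
  refine Finset.sum_pos' (fun k _ => mul_nonneg (h0 k) (sq_nonneg _)) ⟨i, Finset.mem_univ i, ?_⟩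
  exact mul_pos (hpos i hri) (by positivity)

lemma entry_bmb (B : Matrix (Fin n) (Fin d) ℝ) (M : Matrix (Fin d) (Fin d) ℝ) (i : Fin n) :
    (B * M * Bᵀ) i i = (fun j => B i j) ⬝ᵥ M *ᵥ (fun j => B i j) := by
  simp only [Matrix.mul_apply, Matrix.transpose_apply, dotProduct, Matrix.mulVec,
    Finset.sum_mul, Finset.mul_sum]
  rw [Finset.sum_comm]
  exact Finset.sum_congr rfl fun k _ => Finset.sum_congr rfl fun j _ => by ring

lemma diagmulsq (A : Matrix (Fin n) (Fin d) ℝ) (g : Fin n → ℝ) :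
    (Matrix.diagonal g * A)ᵀ * (Matrix.diagonal g * A) = Gm A (fun i => g i ^ 2) := by
  unfold Gm
  rw [Matrix.transpose_mul, Matrix.diagonal_transpose, Matrix.mul_assoc,
    ← Matrix.mul_assoc (Matrix.diagonal g), Matrix.diagonal_mul_diagonal, ← Matrix.mul_assoc]
  congr 1
  congr 1
  ext i j
  simp [pow_two]

lemma lev_eq (A : Matrix (Fin n) (Fin d) ℝ) (g : Fin n → ℝ) (i : Fin n) :
    lev (Matrix.diagonal g * A) i = g i ^ 2 * tau A (fun k => g k ^ 2) i := by
  unfold lev tau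
  rw [diagmulsq, entry_bmb]
  have hrow : (fun j => (Matrix.diagonal g * A) i j) = g i • rw' A i := by
    funext j
    simp [Matrix.mul_apply, Matrix.diagonal, rw', Finset.sum_mul, mul_comm]
  rw [hrow, smul_dotProduct, mulVec_smul, dotProduct_smul]
  simp [pow_two, smul_eq_mul]; ring

lemma sum_m_tau (A : Matrix (Fin n) (Fin d) ℝ) (m : Fin n → ℝ) (hG : (Gm A m).PosDef) :
    ∑ i, m i * tau A m i = d := by
  have hdet : IsUnit (Gm A m).det := hG.det_pos.ne'.isUnit
  have key : ∑ i, m i * tau A m i = Matrix.trace ((Gm A m)⁻¹ * Gm A m) := by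
    have : (Gm A m)⁻¹ * Gm A m = (Gm A m)⁻¹ * (Aᵀ * Matrix.diagonal m * A) := rfl
    rw [this]
    unfold tau rw'
    simp only [Matrix.trace, Matrix.diag, Matrix.mul_apply, dotProduct, Matrix.mulVec,
      Matrix.transpose_apply, Matrix.diagonal_apply, Finset.mul_sum, Finset.sum_mul,
      mul_ite, ite_mul, mul_zero, zero_mul, Finset.sum_ite_eq, Finset.sum_ite_eq',
      Finset.mem_univ, if_true]
    rw [Finset.sum_comm]
    refine Finset.sum_congr rfl fun j _ => ?_
    rw [Finset.sum_comm]
    exact Finset.sum_congr rfl fun k _ => Finset.sum_congr rfl fun i _ => by ring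
  rw [key, Matrix.nonsing_inv_mul _ hdet, Matrix.trace_one]
  simp

lemma mulVec_inv_cancel {k : ℕ} {H : Matrix (Fin k) (Fin k) ℝ} (hH : H.PosDef) (y : Fin k → ℝ) :
    H *ᵥ (H⁻¹ *ᵥ y) = y := by
  rw [mulVec_mulVec, Matrix.mul_nonsing_inv _ hH.det_pos.ne'.isUnit, one_mulVec]

lemma dp_inv_nonneg {k : ℕ} {H : Matrix (Fin k) (Fin k) ℝ} (hH : H.PosDef) (y : Fin k → ℝ) :
    0 ≤ y ⬝ᵥ H⁻¹ *ᵥ y := by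
  have := hH.inv.posSemidef.dotProduct_mulVec_nonneg y
  simpa using this

lemma inv_quad_le {k : ℕ} {G H : Matrix (Fin k) (Fin k) ℝ} (hG : G.PosDef) (hH : H.PosDef)
    {κ : ℝ} (hκ : 0 < κ) (hle : ∀ x, x ⬝ᵥ H *ᵥ x ≤ κ * (x ⬝ᵥ G *ᵥ x)) (y : Fin k → ℝ) :
    y ⬝ᵥ G⁻¹ *ᵥ y ≤ κ * (y ⬝ᵥ H⁻¹ *ᵥ y) := by
  have hGt : Gᵀ = G := by
    rw [← conjTranspose_eq_transpose_of_trivial]; exact hG.isHermitian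
  have hHt : Hᵀ = H := by
    rw [← conjTranspose_eq_transpose_of_trivial]; exact hH.isHermitian
  set a := H⁻¹ *ᵥ y with ha
  set b := G⁻¹ *ᵥ y with hb
  have h1 : a ⬝ᵥ H *ᵥ b = y ⬝ᵥ G⁻¹ *ᵥ y := by
    rw [dotProduct_mulVec, vecMul_symm hHt, ha, mulVec_inv_cancel hH, hb]
  have h2 : a ⬝ᵥ H *ᵥ a = y ⬝ᵥ H⁻¹ *ᵥ y := by
    rw [dotProduct_mulVec, vecMul_symm hHt, ha, mulVec_inv_cancel hH]
  have h3 : b ⬝ᵥ G *ᵥ b = y ⬝ᵥ G⁻¹ *ᵥ y := by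
    rw [dotProduct_mulVec, vecMul_symm hGt, hb, mulVec_inv_cancel hG]
  have hcs := csPSD hH.posSemidef a b
  rw [h1, h2] at hcs
  have hb3 : b ⬝ᵥ H *ᵥ b ≤ κ * (y ⬝ᵥ G⁻¹ *ᵥ y) := by rw [← h3]; exact hle b
  have ht0 : 0 ≤ y ⬝ᵥ G⁻¹ *ᵥ y := dp_inv_nonneg hG y
  have hs0 : 0 ≤ y ⬝ᵥ H⁻¹ *ᵥ y := dp_inv_nonneg hH y
  rcases eq_or_lt_of_le ht0 with h | h
  · rw [← h]; positivity
  · have hbH : 0 ≤ b ⬝ᵥ H *ᵥ b := by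
      have := hH.posSemidef.dotProduct_mulVec_nonneg b; simpa using this
    nlinarith [hcs, hb3, h, hs0]

lemma row_sq_le (A : Matrix (Fin n) (Fin d) ℝ) (m : Fin n → ℝ) (hG : (Gm A m).PosDef)
    (x : Fin d → ℝ) (i : Fin n) :
    ((A *ᵥ x) i)^2 ≤ tau A m i * (x ⬝ᵥ (Gm A m) *ᵥ x) := by
  have hGt : (Gm A m)ᵀ = Gm A m := by
    rw [← conjTranspose_eq_transpose_of_trivial]; exact hG.isHermitian
  have hcs := csPSD hG.inv.posSemidef (rw' A i) ((Gm A m) *ᵥ x)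
  have hinv : (Gm A m)⁻¹ *ᵥ ((Gm A m) *ᵥ x) = x := by
    rw [mulVec_mulVec, Matrix.nonsing_inv_mul _ hG.det_pos.ne'.isUnit, one_mulVec]
  rw [hinv] at hcs
  have h2 : ((Gm A m) *ᵥ x) ⬝ᵥ x = x ⬝ᵥ (Gm A m) *ᵥ x := dotProduct_comm _ _
  have h4 : (A *ᵥ x) i = rw' A i ⬝ᵥ x := rfl
  calc ((A *ᵥ x) i)^2 = (rw' A i ⬝ᵥ x)^2 := by rw [h4]
    _ ≤ (rw' A i ⬝ᵥ (Gm A m)⁻¹ *ᵥ rw' A i) * (((Gm A m) *ᵥ x) ⬝ᵥ x) := hcs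
    _ = tau A m i * (x ⬝ᵥ (Gm A m) *ᵥ x) := by rw [h2, tau]

lemma sq_rpow {x : ℝ} (hx : 0 ≤ x) (c : ℝ) : (x ^ c)^(2:ℕ) = x ^ (2*c) := by
  rw [← Real.rpow_natCast (x ^ c) 2, ← Real.rpow_mul hx, mul_comm]
  norm_num

lemma bern {q e : ℝ} (hq : 0 ≤ q) (he : 0 < e) : (1+e)^q - 1 ≤ q*e*(1+e)^q := by
  have h1e : (0:ℝ) < 1 + e := by linarith
  have hF : 0 < (1+e)^q := Real.rpow_pos_of_pos h1e q
  have hexp : 1 + (-q) * Real.log (1+e) ≤ (1+e)^(-q) := by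
    rw [Real.rpow_def_of_pos h1e]
    have := Real.add_one_le_exp (Real.log (1+e) * (-q))
    linarith [this]
  have hlog : Real.log (1+e) ≤ e := by
    have := Real.log_le_sub_one_of_pos h1e
    linarith
  have hinv : (1+e)^(-q) * (1+e)^q = 1 := by
    rw [← Real.rpow_add h1e]; simp
  have hlog0 : 0 ≤ Real.log (1+e) := Real.log_nonneg (by linarith)
  have h2 : 1 - q*e ≤ (1+e)^(-q) := by
    have : 1 - q * e ≤ 1 + (-q) * Real.log (1+e) := by nlinarith
    linarith
  nlinarith

lemma beta_pt {q s t : ℝ} (hq : 0 ≤ q) (hs : 0 < s) (ht : 0 ≤ t) :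
    max (s^q - t^q) 0 * t ≤ q * max (s^(q+1) - s^q * t) 0 := by
  rcases le_or_gt s t with h | h
  · rw [max_eq_right (by linarith [Real.rpow_le_rpow hs.le h hq] : s^q - t^q ≤ 0), zero_mul]
    positivity
  · have hmax2 : max (s^(q+1) - s^q * t) 0 = s^(q+1) - s^q * t := by
      apply max_eq_left
      have : s^(q+1) = s^q * s := by rw [Real.rpow_add hs]; simp
      rw [this]
      have : 0 ≤ s^q := (Real.rpow_pos_of_pos hs q).le
      nlinarith
    have hmax1 : max (s^q - t^q) 0 = s^q - t^q := by
      apply max_eq_left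
      have := Real.rpow_le_rpow ht h.le hq
      linarith
    rw [hmax1, hmax2]
    rcases eq_or_lt_of_le ht with rfl | ht0
    · simp only [mul_zero, sub_zero]
      have : 0 ≤ s^(q+1) := (Real.rpow_pos_of_pos hs _).le
      positivity
    · -- 0 < t < s
      have hsq : (0:ℝ) < s^q := Real.rpow_pos_of_pos hs q
      have hC : t^q = s^q * (t/s)^q := by
        rw [← Real.mul_rpow (le_of_lt hs) (by positivity)]
        rw [mul_div_cancel₀ _ hs.ne']
      have hD : s^(q+1) = s^q * s := by rw [Real.rpow_add hs]; simp
      have hxq : 1 - (t/s)^q ≤ q * Real.log (s/t) := by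
        have hts : (0:ℝ) < t/s := by positivity
        have hexp : 1 + Real.log (t/s) * q ≤ (t/s)^q := by
          rw [Real.rpow_def_of_pos hts]
          linarith [Real.add_one_le_exp (Real.log (t/s) * q)]
        have hloginv : Real.log (t/s) = - Real.log (s/t) := by
          rw [show t/s = (s/t)⁻¹ by field_simp, Real.log_inv]
        rw [hloginv] at hexp
        linarith
      have hlog2 : t * Real.log (s/t) ≤ s - t := by
        have h1 : Real.log (s/t) ≤ s/t - 1 := Real.log_le_sub_one_of_pos (by positivity)
        have h2 := mul_le_mul_of_nonneg_left h1 ht0.le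
        calc t * Real.log (s/t) ≤ t * (s/t - 1) := h2
          _ = s - t := by field_simp
      calc (s^q - t^q) * t = s^q * ((1 - (t/s)^q) * t) := by rw [hC]; ring
        _ ≤ s^q * ((q * Real.log (s/t)) * t) := by
            apply mul_le_mul_of_nonneg_left _ hsq.le
            exact mul_le_mul_of_nonneg_right hxq ht0.le
        _ = (s^q * q) * (t * Real.log (s/t)) := by ring
        _ ≤ (s^q * q) * (s - t) := mul_le_mul_of_nonneg_left hlog2 (by positivity)
        _ = q * (s^(q+1) - s^q * t) := by rw [hD]; ring


set_option maxHeartbeats 1000000 in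
theorem two_sided_of_one_sided {n d : ℕ} (A : Matrix (Fin n) (Fin d) ℝ)
    (hA : A.rank = d) (p : ℝ) (hp : 2 ≤ p) (ε : ℝ) (hε : 0 < ε) (hε1 : ε < 1)
    (w : Fin n → ℝ) (hw : ∀ i, 0 < w i)
    (hone : ∀ i, lev (dpow w (1 / 2 - 1 / p) * A) i ≤ (1 + ε) * w i)
    (hsum : ∑ i, |w i| ≤ (1 + ε) * d)
    (v : Fin n → ℝ) (hv : v = lewisT A p w)
    (α : ℝ) (hα : α = 3 * ε * (p / 2 - 1) * (1 + ε) ^ (p / 2 - 1) * d) :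
    ∀ i, (1 - α) * lev (dpow v (1 / 2 - 1 / p) * A) i ≤ v i ∧
      v i ≤ (1 + α) * lev (dpow v (1 / 2 - 1 / p) * A) i := by
  have hp0 : (0:ℝ) < p := by linarith
  set q : ℝ := p/2 - 1 with hqdef
  have hq0 : (0:ℝ) ≤ q := by rw [hqdef]; linarith
  set u : Fin n → ℝ := fun i => w i ^ (2*(1/2 - 1/p)) with hu
  have hupos : ∀ i, 0 < u i := fun i => Real.rpow_pos_of_pos (hw i) _
  have hinj := inj_of_rank A hA
  have hGpd : (Gm A u).PosDef := posdefG A hinj u (fun i => (hupos i).le) (fun i _ => hupos i)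
  set τ : Fin n → ℝ := tau A u with hτdef
  have hτ0 : ∀ i, 0 ≤ τ i := fun i => dp_inv_nonneg hGpd (rw' A i)
  have hlevw : ∀ i, lev (dpow w (1/2 - 1/p) * A) i = u i * τ i := by
    intro i
    rw [show dpow w (1/2 - 1/p) = Matrix.diagonal (fun k => w k ^ (1/2 - 1/p)) from rfl, lev_eq]
    have h2 : (fun k => (w k ^ ((1:ℝ)/2 - 1/p))^(2:ℕ)) = u := funext fun k => by
      rw [sq_rpow (hw k).le]
    rw [h2, sq_rpow (hw i).le]
  have hone' : ∀ i, u i * τ i ≤ (1+ε) * w i := fun i => by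
    have := hone i; rwa [hlevw i] at this
  have hsum'' : ∑ i, u i * τ i = d := sum_m_tau A u hGpd
  have hwsum : ∑ i, w i ≤ (1+ε) * d := by
    calc ∑ i, w i = ∑ i, |w i| := Finset.sum_congr rfl fun i _ => (abs_of_pos (hw i)).symm
    _ ≤ (1+ε)*d := hsum
  set s : Fin n → ℝ := fun i => w i ^ (2/p) with hsdef
  have hspos : ∀ i, 0 < s i := fun i => Real.rpow_pos_of_pos (hw i) _
  have husq : ∀ i, u i = s i ^ q := by
    intro i
    show w i ^ (2*(1/2-1/p)) = (w i ^ ((2:ℝ)/p)) ^ q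
    rw [← Real.rpow_mul (hw i).le]
    congr 1
    field_simp
    ring
  have hw_eq : ∀ i, w i = s i ^ (q+1) := by
    intro i
    show w i = (w i ^ ((2:ℝ)/p)) ^ (q+1)
    rw [← Real.rpow_mul (hw i).le, show (2/p)*(q+1) = 1 by rw [hqdef]; field_simp; ring,
      Real.rpow_one]
  have hw_us : ∀ i, w i = u i * s i := by
    intro i
    show w i = w i ^ (2*(1/2-1/p)) * w i ^ ((2:ℝ)/p)
    rw [← Real.rpow_add (hw i), show 2*(1/2-1/p) + 2/p = 1 by field_simp; ring, Real.rpow_one]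
  have hτs : ∀ i, τ i ≤ (1+ε) * s i := by
    intro i
    have h := hone' i
    rw [hw_us i] at h
    have h2 : u i * τ i ≤ u i * ((1+ε) * s i) := by nlinarith [hupos i]
    exact le_of_mul_le_mul_left h2 (hupos i)
  have hvτ : ∀ i, v i = τ i ^ (q+1) := by
    intro i
    rw [hv]
    show w i ^ (1 - p / 2) * lev (dpow w (1 / 2 - 1 / p) * A) i ^ (p / 2) = τ i ^ (q+1)
    rw [hlevw i, Real.mul_rpow (hupos i).le (hτ0 i)]
    have hup : u i ^ (p/2) = w i ^ (p/2 - 1) := by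
      show (w i ^ (2*((1:ℝ)/2-1/p))) ^ (p/2) = w i ^ (p/2 - 1)
      rw [← Real.rpow_mul (hw i).le]
      congr 1
      field_simp
    rw [hup, ← mul_assoc, ← Real.rpow_add (hw i),
      show (1 - p/2) + (p/2 - 1) = 0 by ring, Real.rpow_zero, one_mul]
    congr 1
    rw [hqdef]; ring
  have hv0 : ∀ i, 0 ≤ v i := fun i => by rw [hvτ i]; exact Real.rpow_nonneg (hτ0 i) _
  set v' : Fin n → ℝ := fun i => τ i ^ q with hv'def
  have hv'0 : ∀ i, 0 ≤ v' i := fun i => Real.rpow_nonneg (hτ0 i) _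
  have hτpos : ∀ i, rw' A i ≠ 0 → 0 < τ i := by
    intro i hri
    have h := hGpd.inv.dotProduct_mulVec_pos hri
    have hst : star (rw' A i) = rw' A i := by funext j; simp
    rw [hst] at h
    exact h
  have hv'pos : ∀ i, rw' A i ≠ 0 → 0 < v' i := fun i h => Real.rpow_pos_of_pos (hτpos i h) q
  have hHpd : (Gm A v').PosDef := posdefG A hinj v' hv'0 hv'pos
  set τ' : Fin n → ℝ := tau A v' with hτ'def
  have hτ'0 : ∀ i, 0 ≤ τ' i := fun i => dp_inv_nonneg hHpd (rw' A i)
  have hlevv : ∀ i, lev (dpow v (1/2 - 1/p) * A) i = v' i * τ' i := by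
    intro i
    rw [show dpow v (1/2 - 1/p) = Matrix.diagonal (fun k => v k ^ (1/2 - 1/p)) from rfl, lev_eq]
    have h2 : ∀ k, (v k ^ ((1:ℝ)/2 - 1/p))^(2:ℕ) = v' k := fun k => by
      rw [sq_rpow (hv0 k), hvτ k, ← Real.rpow_mul (hτ0 k)]
      show τ k ^ ((q+1) * (2*(1/2-1/p))) = τ k ^ q
      congr 1
      rw [hqdef]
      field_simp
      ring
    rw [show (fun k => (v k ^ ((1:ℝ)/2 - 1/p))^(2:ℕ)) = v' from funext h2, h2 i]
  have hvv : ∀ i, v i = v' i * τ i := by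
    intro i
    rcases (hτ0 i).eq_or_lt with h | h
    · rw [hvτ i, ← h, Real.zero_rpow (by linarith : q + 1 ≠ 0), mul_zero]
    · rw [hvτ i, Real.rpow_add h, Real.rpow_one]
  have hγpos : (0:ℝ) < (1+ε)^q := Real.rpow_pos_of_pos (by linarith) q
  have hγ1 : (1:ℝ) ≤ (1+ε)^q := Real.one_le_rpow (by linarith) hq0
  have hv'u : ∀ i, v' i ≤ (1+ε)^q * u i := by
    intro i
    rw [husq i]
    calc v' i = τ i ^ q := rfl
      _ ≤ ((1+ε) * s i)^q := Real.rpow_le_rpow (hτ0 i) (hτs i) hq0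
      _ = (1+ε)^q * s i ^ q := Real.mul_rpow (by linarith) (hspos i).le
  have hformU : ∀ x, x ⬝ᵥ (Gm A v') *ᵥ x ≤ (1+ε)^q * (x ⬝ᵥ (Gm A u) *ᵥ x) := by
    intro x
    rw [quadG, quadG, Finset.mul_sum]
    apply Finset.sum_le_sum
    intro i _
    have := hv'u i
    nlinarith [sq_nonneg ((A *ᵥ x) i)]
  set β : ℝ := ∑ i, max (u i - v' i) 0 * τ i with hβdef
  have hβ0 : 0 ≤ β := Finset.sum_nonneg fun i _ => mul_nonneg (le_max_right _ _) (hτ0 i)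
  have hd0 : (0:ℝ) ≤ d := Nat.cast_nonneg d
  have hβ3 : β ≤ 3*ε*q*d := by
    have hβ1 : β ≤ ∑ i, q * max (w i - u i * τ i) 0 := by
      apply Finset.sum_le_sum
      intro i _
      have hb := beta_pt hq0 (hspos i) (hτ0 i)
      rw [← husq i, ← hw_eq i] at hb
      calc max (u i - v' i) 0 * τ i = max (u i - τ i ^ q) 0 * τ i := rfl
        _ ≤ q * max (w i - u i * τ i) 0 := by
          rw [husq i] at hb ⊢
          exact hb
    have hmax_pt : ∀ i, max (w i - u i * τ i) 0 ≤ (w i - u i * τ i) + ε * w i := by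
      intro i
      rcases le_total (u i * τ i) (w i) with h | h
      · rw [max_eq_left (by linarith)]
        nlinarith [hw i]
      · rw [max_eq_right (by linarith)]
        have := hone' i
        linarith
    have hβ2 : ∑ i, max (w i - u i * τ i) 0 ≤ 3*ε*d := by
      calc ∑ i, max (w i - u i * τ i) 0 ≤ ∑ i, ((w i - u i * τ i) + ε * w i) :=
            Finset.sum_le_sum fun i _ => hmax_pt i
        _ = (∑ i, w i) - (∑ i, u i * τ i) + ε * ∑ i, w i := by
            rw [Finset.sum_add_distrib, Finset.sum_sub_distrib, Finset.mul_sum]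
        _ ≤ (1+ε)*d - d + ε * ((1+ε)*d) := by
            have hε0 : 0 ≤ ε := hε.le
            have := hwsum
            rw [hsum'']
            nlinarith
        _ ≤ 3*ε*d := by nlinarith [hd0, hε, hε1, mul_nonneg (mul_nonneg hε.le (by linarith : (0:ℝ) ≤ 1 - ε)) hd0]
    calc β ≤ ∑ i, q * max (w i - u i * τ i) 0 := hβ1
      _ = q * ∑ i, max (w i - u i * τ i) 0 := by rw [Finset.mul_sum]
      _ ≤ q * (3*ε*d) := by
          apply mul_le_mul_of_nonneg_left hβ2 hq0
      _ = 3*ε*q*d := by ring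
  have hβα : β ≤ α := by
    rw [hα]
    have h0 : (0:ℝ) ≤ 3*ε*q*d := mul_nonneg (mul_nonneg (mul_nonneg (by norm_num) hε.le) hq0) hd0
    calc β ≤ 3*ε*q*d := hβ3
      _ = 3*ε*q*(d:ℝ) * 1 := by ring
      _ ≤ 3*ε*q*(d:ℝ) * (1+ε)^q := mul_le_mul_of_nonneg_left hγ1 h0
      _ = 3*ε*q*(1+ε)^q*d := by ring
  have hα0 : 0 ≤ α := le_trans hβ0 hβα
  have hformL : ∀ x, x ⬝ᵥ (Gm A u) *ᵥ x ≤ x ⬝ᵥ (Gm A v') *ᵥ x + β * (x ⬝ᵥ (Gm A u) *ᵥ x) := by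
    intro x
    have hQ0 : 0 ≤ x ⬝ᵥ (Gm A u) *ᵥ x := by
      have h := hGpd.posSemidef.dotProduct_mulVec_nonneg x
      have hst : star x = x := by funext j; simp
      rw [hst] at h
      exact h
    have key : ∀ i, u i * ((A *ᵥ x) i)^2 ≤
        v' i * ((A *ᵥ x) i)^2 + (max (u i - v' i) 0 * τ i) * (x ⬝ᵥ (Gm A u) *ᵥ x) := by
      intro i
      have h1 := row_sq_le A u hGpd x i
      have h2 : u i - v' i ≤ max (u i - v' i) 0 := le_max_left _ _
      have h3 : 0 ≤ max (u i - v' i) 0 := le_max_right _ _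
      have h4 : (u i - v' i) * ((A *ᵥ x) i)^2 ≤ max (u i - v' i) 0 * ((A *ᵥ x) i)^2 :=
        mul_le_mul_of_nonneg_right h2 (sq_nonneg _)
      have h5 : max (u i - v' i) 0 * ((A *ᵥ x) i)^2 ≤ max (u i - v' i) 0 * (τ i * (x ⬝ᵥ (Gm A u) *ᵥ x)) :=
        mul_le_mul_of_nonneg_left h1 h3
      linarith [h4, h5]
    calc x ⬝ᵥ (Gm A u) *ᵥ x = ∑ i, u i * ((A*ᵥx) i)^2 := quadG A u x
      _ ≤ ∑ i, (v' i * ((A*ᵥx) i)^2 + (max (u i - v' i) 0 * τ i) * (x ⬝ᵥ (Gm A u) *ᵥ x)) :=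
          Finset.sum_le_sum fun i _ => key i
      _ = (∑ i, v' i * ((A*ᵥx) i)^2) + β * (x ⬝ᵥ (Gm A u) *ᵥ x) := by
          rw [Finset.sum_add_distrib, ← Finset.sum_mul]
      _ = x ⬝ᵥ (Gm A v') *ᵥ x + β * (x ⬝ᵥ (Gm A u) *ᵥ x) := by rw [← quadG]
  have hbound1 : ∀ i, τ i ≤ (1+ε)^q * τ' i := fun i =>
    inv_quad_le hGpd hHpd hγpos hformU (rw' A i)
  intro i
  rw [hlevv i, hvv i]
  constructor
  · rcases le_or_gt 1 α with h1 | h1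
    · have hnn : 0 ≤ v' i * τ' i := mul_nonneg (hv'0 i) (hτ'0 i)
      have : (1-α) * (v' i * τ' i) ≤ 0 := mul_nonpos_of_nonpos_of_nonneg (by linarith) hnn
      calc (1-α) * (v' i * τ' i) ≤ 0 := this
        _ ≤ v' i * τ i := mul_nonneg (hv'0 i) (hτ0 i)
    · have hβ1 : β < 1 := lt_of_le_of_lt hβα h1
      have h1β : (0:ℝ) < 1 - β := by linarith
      have hformL' : ∀ x, x ⬝ᵥ (Gm A u) *ᵥ x ≤ (1-β)⁻¹ * (x ⬝ᵥ (Gm A v') *ᵥ x) := by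
        intro x
        have h := hformL x
        have h2 : (1-β) * (x ⬝ᵥ (Gm A u) *ᵥ x) ≤ x ⬝ᵥ (Gm A v') *ᵥ x := by linarith
        calc x ⬝ᵥ (Gm A u) *ᵥ x = (1-β)⁻¹ * ((1-β) * (x ⬝ᵥ (Gm A u) *ᵥ x)) := by
              field_simp
          _ ≤ (1-β)⁻¹ * (x ⬝ᵥ (Gm A v') *ᵥ x) :=
              mul_le_mul_of_nonneg_left h2 (inv_nonneg.mpr h1β.le)
      have hbound2 : τ' i ≤ (1-β)⁻¹ * τ i :=
        inv_quad_le hHpd hGpd (inv_pos.mpr h1β) hformL' (rw' A i)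
      have h2 : (1-β) * τ' i ≤ τ i := by
        calc (1-β) * τ' i ≤ (1-β) * ((1-β)⁻¹ * τ i) :=
              mul_le_mul_of_nonneg_left hbound2 h1β.le
          _ = τ i := by field_simp
      calc (1-α)*(v' i * τ' i) ≤ (1-β)*(v' i * τ' i) := by
            have hnn : 0 ≤ v' i * τ' i := mul_nonneg (hv'0 i) (hτ'0 i)
            nlinarith [hβα]
        _ = v' i * ((1-β) * τ' i) := by ring
        _ ≤ v' i * τ i := mul_le_mul_of_nonneg_left h2 (hv'0 i)
  · rcases (hτ0 i).eq_or_lt with h | h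
    · have hvi : v' i * τ i = 0 := by rw [← h, mul_zero]
      rw [hvi]
      exact mul_nonneg (by linarith) (mul_nonneg (hv'0 i) (hτ'0 i))
    · have hri : rw' A i ≠ 0 := by
        intro h0
        have : τ i = 0 := by
          show rw' A i ⬝ᵥ (Gm A u)⁻¹ *ᵥ rw' A i = 0
          rw [h0, zero_dotProduct]
        linarith
      have hd1 : (1:ℝ) ≤ d := by
        rcases Nat.eq_zero_or_pos d with h0 | h0
        · exfalso
          apply hri
          funext j
          rw [h0] at j
          exact j.elim0
        · exact_mod_cast h0
      have hγα : (1+ε)^q - 1 ≤ α := by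
        have hb := bern hq0 hε
        rw [hα]
        have h3 : q*ε*(1+ε)^q ≤ 3*ε*q*(1+ε)^q*d := by
          have h4 : (0:ℝ) ≤ q*ε*(1+ε)^q := mul_nonneg (mul_nonneg hq0 hε.le) hγpos.le
          nlinarith [h4, hd1]
        linarith
      have hb1 := hbound1 i
      calc v' i * τ i ≤ v' i * ((1+ε)^q * τ' i) := mul_le_mul_of_nonneg_left hb1 (hv'0 i)
        _ = (1+ε)^q * (v' i * τ' i) := by ring
        _ ≤ (1+α) * (v' i * τ' i) := by
            have hnn : 0 ≤ v' i * τ' i := mul_nonneg (hv'0 i) (hτ'0 i)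
            nlinarith [hγα]
end

section
/- Let A ∈ ℝ^{n×d} have full column rank, let p ≥ 2 and γ ≥ 1. Let v, ṽ ∈ ℝ^n_{>0} satisfy γ^{-1} ṽ_i ≤ v_i ≤ γ ṽ_i for all i ∈ [n]. Then for every i ∈ [n], γ^{-1} · σ_i(Ṽ^{1/2−1/p}A)/ṽ_i ≤ σ_i(V^{1/2−1/p}A)/v_i ≤ γ · σ_i(Ṽ^{1/2−1/p}A)/ṽ_i, where V = Diag(v) and Ṽ = Diag(ṽ). -/
open Matrix BigOperators

lemma quad_repr {n d : ℕ} (A : Matrix (Fin n) (Fin d) ℝ) (w : Fin n → ℝ) (e : ℝ)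
    (x : Fin d → ℝ) :
    x ⬝ᵥ (Aᵀ * dpow w e * A) *ᵥ x = ∑ i, w i ^ e * ((A *ᵥ x) i)^2 := by
  rw [← Matrix.mulVec_mulVec, ← Matrix.mulVec_mulVec, Matrix.dotProduct_mulVec,
    Matrix.vecMul_transpose]
  simp only [dpow, Matrix.mulVec_diagonal, dotProduct]
  exact Finset.sum_congr rfl fun i _ => by ring

lemma mulVec_inj {n d : ℕ} (A : Matrix (Fin n) (Fin d) ℝ) (hA : A.rank = d) :
    Function.Injective A.mulVec := by
  rw [← Matrix.coe_mulVecLin, ← LinearMap.ker_eq_bot]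
  have h := A.mulVecLin.finrank_range_add_finrank_ker
  rw [show Module.finrank ℝ (LinearMap.range A.mulVecLin) = d from hA] at h
  simp only [Module.finrank_pi, Fintype.card_fin] at h
  exact Submodule.finrank_eq_zero.mp (by omega)

lemma posdef_M {n d : ℕ} (A : Matrix (Fin n) (Fin d) ℝ) (hA : A.rank = d)
    (w : Fin n → ℝ) (hw : ∀ i, 0 < w i) (e : ℝ) : (Aᵀ * dpow w e * A).PosDef := by
  rw [Matrix.posDef_iff_dotProduct_mulVec]
  constructor
  · show _ = _
    rw [Matrix.conjTranspose_eq_transpose_of_trivial, Matrix.transpose_mul, Matrix.transpose_mul,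
      Matrix.transpose_transpose, Matrix.mul_assoc]
    congr 1
    simp [dpow]
  · intro x hx
    rw [star_trivial, quad_repr]
    have hAx : A *ᵥ x ≠ 0 := fun h => hx (mulVec_inj A hA (by simpa using h))
    obtain ⟨j, hj⟩ := Function.ne_iff.mp hAx
    refine Finset.sum_pos' (fun i _ => mul_nonneg (Real.rpow_pos_of_pos (hw i) e).le (sq_nonneg _))
      ⟨j, Finset.mem_univ j, mul_pos (Real.rpow_pos_of_pos (hw j) e)
        (pow_pos (abs_pos.mpr hj) 2 |> fun h => by simpa [sq_abs] using h)⟩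

lemma key_quad {d : ℕ} {M : Matrix (Fin d) (Fin d) ℝ} (hM : M.PosDef)
    (x y : Fin d → ℝ) :
    2 * (y ⬝ᵥ x) - y ⬝ᵥ M *ᵥ y ≤ x ⬝ᵥ M⁻¹ *ᵥ x := by
  have hdet : IsUnit M.det := isUnit_iff_ne_zero.mpr hM.det_pos.ne'
  set z := M⁻¹ *ᵥ x with hzdef
  have hMz : M *ᵥ z = x := by
    rw [hzdef, Matrix.mulVec_mulVec, Matrix.mul_nonsing_inv _ hdet, Matrix.one_mulVec]
  have hMT : Mᵀ = M := by
    have := hM.isHermitian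
    rwa [Matrix.IsHermitian, Matrix.conjTranspose_eq_transpose_of_trivial] at this
  have hsym : ∀ a b : Fin d → ℝ, a ⬝ᵥ M *ᵥ b = (M *ᵥ a) ⬝ᵥ b := by
    intro a b
    rw [Matrix.dotProduct_mulVec, ← Matrix.mulVec_transpose, hMT]
  have h0 : (0:ℝ) ≤ (y - z) ⬝ᵥ M *ᵥ (y - z) := by
    have := hM.posSemidef.dotProduct_mulVec_nonneg (y - z)
    simpa using this
  have hexp : (y - z) ⬝ᵥ M *ᵥ (y - z)
      = y ⬝ᵥ M *ᵥ y - 2 * (y ⬝ᵥ x) + x ⬝ᵥ M⁻¹ *ᵥ x := by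
    have h1 : y ⬝ᵥ M *ᵥ z = y ⬝ᵥ x := by rw [hMz]
    have h2 : z ⬝ᵥ M *ᵥ y = y ⬝ᵥ x := by rw [hsym, hMz, dotProduct_comm]
    have h3 : z ⬝ᵥ M *ᵥ z = x ⬝ᵥ M⁻¹ *ᵥ x := by
      rw [hMz, dotProduct_comm]
    rw [Matrix.mulVec_sub, sub_dotProduct, dotProduct_sub,
      dotProduct_sub, h1, h2, h3]
    ring
  linarith [h0, hexp.symm.le]

lemma inv_quad_le_s5 {d : ℕ} {M₁ M₂ : Matrix (Fin d) (Fin d) ℝ} (h1 : M₁.PosDef) (h2 : M₂.PosDef)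
    {g : ℝ} (hg : 0 < g) (hcmp : ∀ y, y ⬝ᵥ M₁ *ᵥ y ≤ g * (y ⬝ᵥ M₂ *ᵥ y)) (x : Fin d → ℝ) :
    x ⬝ᵥ M₂⁻¹ *ᵥ x ≤ g * (x ⬝ᵥ M₁⁻¹ *ᵥ x) := by
  have hdet : IsUnit M₂.det := isUnit_iff_ne_zero.mpr h2.det_pos.ne'
  set z := M₂⁻¹ *ᵥ x with hzdef
  have hMz : M₂ *ᵥ z = x := by
    rw [hzdef, Matrix.mulVec_mulVec, Matrix.mul_nonsing_inv _ hdet, Matrix.one_mulVec]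
  set q := x ⬝ᵥ M₂⁻¹ *ᵥ x with hq
  set y := g⁻¹ • z with hydef
  have hyx : y ⬝ᵥ x = g⁻¹ * q := by
    rw [hydef, smul_dotProduct, hq, dotProduct_comm]
    rfl
  have hyMy : y ⬝ᵥ M₂ *ᵥ y = g⁻¹ * (g⁻¹ * q) := by
    rw [hydef, Matrix.mulVec_smul, smul_dotProduct, dotProduct_smul, hMz,
      dotProduct_comm, smul_eq_mul, smul_eq_mul, hq]
  have hk := key_quad h1 x y
  have hc := hcmp y
  rw [hyMy] at hc
  rw [hyx] at hk
  have hg' : g * g⁻¹ = 1 := mul_inv_cancel₀ hg.ne'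
  have hred : g * (g⁻¹ * (g⁻¹ * q)) = g⁻¹ * q := by rw [← mul_assoc, hg', one_mul]
  rw [hred] at hc
  have h5 : g⁻¹ * q ≤ x ⬝ᵥ M₁⁻¹ *ᵥ x := by linarith
  calc q = g * (g⁻¹ * q) := by rw [← mul_assoc, hg', one_mul]
    _ ≤ g * (x ⬝ᵥ M₁⁻¹ *ᵥ x) := mul_le_mul_of_nonneg_left h5 hg.le

lemma lev_eq_s5 {n d : ℕ} (A : Matrix (Fin n) (Fin d) ℝ) (w : Fin n → ℝ) (hw : ∀ i, 0 < w i)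
    (c : ℝ) (i : Fin n) :
    lev (dpow w c * A) i
      = w i ^ (2*c) * (A i ⬝ᵥ (Aᵀ * dpow w (2*c) * A)⁻¹ *ᵥ A i) := by
  have hdd : dpow w c * dpow w c = dpow w (2*c) := by
    simp only [dpow, Matrix.diagonal_mul_diagonal]
    exact congrArg Matrix.diagonal (funext fun j => by rw [two_mul, Real.rpow_add (hw j)])
  have hBtB : (dpow w c * A)ᵀ * (dpow w c * A) = Aᵀ * dpow w (2*c) * A := by
    rw [Matrix.transpose_mul]
    simp only [dpow, Matrix.diagonal_transpose]
    rw [← dpow, ← dpow, Matrix.mul_assoc, ← Matrix.mul_assoc (dpow w c), hdd,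
      ← Matrix.mul_assoc]
  set M := Aᵀ * dpow w (2*c) * A with hM
  have key : dpow w c * A * M⁻¹ * (dpow w c * A)ᵀ
      = dpow w c * (A * M⁻¹ * Aᵀ) * dpow w c := by
    rw [Matrix.transpose_mul]
    simp only [dpow, Matrix.diagonal_transpose, Matrix.mul_assoc]
  have hentry : (A * M⁻¹ * Aᵀ) i i = A i ⬝ᵥ M⁻¹ *ᵥ A i := by
    simp only [Matrix.mul_apply, Matrix.transpose_apply, Matrix.mulVec, dotProduct,
      Finset.sum_mul, Finset.mul_sum]
    rw [Finset.sum_comm]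
    exact Finset.sum_congr rfl fun j _ => Finset.sum_congr rfl fun k _ => by ring
  unfold lev
  rw [hBtB, key]
  simp only [dpow]
  rw [Matrix.mul_diagonal, Matrix.diagonal_mul, hentry, two_mul, Real.rpow_add (hw i)]
  ring

theorem leverage_ratio_stability {n d : ℕ} (A : Matrix (Fin n) (Fin d) ℝ)
    (hA : A.rank = d) (p : ℝ) (hp : 2 ≤ p) (γ : ℝ) (hγ : 1 ≤ γ)
    (v vt : Fin n → ℝ) (hv : ∀ i, 0 < v i) (hvt : ∀ i, 0 < vt i)
    (hlow : ∀ i, γ⁻¹ * vt i ≤ v i) (hhigh : ∀ i, v i ≤ γ * vt i) :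
    ∀ i, γ⁻¹ * (lev (dpow vt (1 / 2 - 1 / p) * A) i / vt i) ≤
        lev (dpow v (1 / 2 - 1 / p) * A) i / v i ∧
      lev (dpow v (1 / 2 - 1 / p) * A) i / v i ≤
        γ * (lev (dpow vt (1 / 2 - 1 / p) * A) i / vt i) := by
  intro i
  have hp0 : (0:ℝ) < p := lt_of_lt_of_le two_pos hp
  have hγ0 : (0:ℝ) < γ := lt_of_lt_of_le one_pos hγ
  set c : ℝ := 1 / 2 - 1 / p with hc
  have he : 0 ≤ 2 * c := by
    have h1 : 1 / p ≤ 1 / 2 := by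
      rw [div_le_div_iff₀ hp0 two_pos]; linarith
    rw [hc]; linarith
  have he1 : 2 * c - 1 ≤ 0 := by
    have h2 : 0 < 1 / p := by positivity
    rw [hc]; linarith
  set Mv := Aᵀ * dpow v (2 * c) * A with hMvdef
  set Mvt := Aᵀ * dpow vt (2 * c) * A with hMvtdef
  have hPv : Mv.PosDef := posdef_M A hA v hv (2 * c)
  have hPvt : Mvt.PosDef := posdef_M A hA vt hvt (2 * c)
  have hgpos : (0:ℝ) < γ ^ (2 * c) := Real.rpow_pos_of_pos hγ0 _
  have hvt' : ∀ j, vt j ≤ γ * v j := by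
    intro j
    have h := hlow j
    calc vt j = γ * (γ⁻¹ * vt j) := by field_simp
      _ ≤ γ * v j := mul_le_mul_of_nonneg_left h hγ0.le
  have hcmp1 : ∀ y, y ⬝ᵥ Mv *ᵥ y ≤ γ ^ (2 * c) * (y ⬝ᵥ Mvt *ᵥ y) := by
    intro y
    rw [hMvdef, hMvtdef, quad_repr, quad_repr, Finset.mul_sum]
    refine Finset.sum_le_sum fun j _ => ?_
    have hb : v j ^ (2 * c) ≤ γ ^ (2 * c) * vt j ^ (2 * c) := by
      rw [← Real.mul_rpow hγ0.le (hvt j).le]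
      exact Real.rpow_le_rpow (hv j).le (hhigh j) he
    calc v j ^ (2 * c) * ((A *ᵥ y) j) ^ 2
        ≤ γ ^ (2 * c) * vt j ^ (2 * c) * ((A *ᵥ y) j) ^ 2 :=
          mul_le_mul_of_nonneg_right hb (sq_nonneg _)
      _ = γ ^ (2 * c) * (vt j ^ (2 * c) * ((A *ᵥ y) j) ^ 2) := by ring
  have hcmp2 : ∀ y, y ⬝ᵥ Mvt *ᵥ y ≤ γ ^ (2 * c) * (y ⬝ᵥ Mv *ᵥ y) := by
    intro y
    rw [hMvdef, hMvtdef, quad_repr, quad_repr, Finset.mul_sum]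
    refine Finset.sum_le_sum fun j _ => ?_
    have hb : vt j ^ (2 * c) ≤ γ ^ (2 * c) * v j ^ (2 * c) := by
      rw [← Real.mul_rpow hγ0.le (hv j).le]
      exact Real.rpow_le_rpow (hvt j).le (hvt' j) he
    calc vt j ^ (2 * c) * ((A *ᵥ y) j) ^ 2
        ≤ γ ^ (2 * c) * v j ^ (2 * c) * ((A *ᵥ y) j) ^ 2 :=
          mul_le_mul_of_nonneg_right hb (sq_nonneg _)
      _ = γ ^ (2 * c) * (v j ^ (2 * c) * ((A *ᵥ y) j) ^ 2) := by ring
  set Qv := A i ⬝ᵥ Mv⁻¹ *ᵥ A i with hQvdef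
  set Qvt := A i ⬝ᵥ Mvt⁻¹ *ᵥ A i with hQvtdef
  have hQ1 : Qvt ≤ γ ^ (2 * c) * Qv := inv_quad_le_s5 hPv hPvt hgpos hcmp1 (A i)
  have hQ2 : Qv ≤ γ ^ (2 * c) * Qvt := inv_quad_le_s5 hPvt hPv hgpos hcmp2 (A i)
  have hQvnn : 0 ≤ Qv := by
    have := hPv.inv.posSemidef.dotProduct_mulVec_nonneg (A i)
    simpa [hQvdef] using this
  have hQvtnn : 0 ≤ Qvt := by
    have := hPvt.inv.posSemidef.dotProduct_mulVec_nonneg (A i)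
    simpa [hQvtdef] using this
  have hlv : lev (dpow v c * A) i / v i = v i ^ (2 * c - 1) * Qv := by
    rw [lev_eq_s5 A v hv c i, mul_div_right_comm,
      show v i ^ (2 * c) / v i = v i ^ (2 * c - 1) by
        rw [Real.rpow_sub (hv i), Real.rpow_one]]
  have hlvt : lev (dpow vt c * A) i / vt i = vt i ^ (2 * c - 1) * Qvt := by
    rw [lev_eq_s5 A vt hvt c i, mul_div_right_comm,
      show vt i ^ (2 * c) / vt i = vt i ^ (2 * c - 1) by
        rw [Real.rpow_sub (hvt i), Real.rpow_one]]
  rw [show (1:ℝ)/2 - 1/p = c from hc.symm] at *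
  rw [hlv, hlvt]
  have hvpownn : (0:ℝ) ≤ v i ^ (2 * c - 1) := (Real.rpow_pos_of_pos (hv i) _).le
  have hvtpownn : (0:ℝ) ≤ vt i ^ (2 * c - 1) := (Real.rpow_pos_of_pos (hvt i) _).le
  constructor
  · -- lower bound
    have hv_pow2 : γ ^ (2 * c - 1) * vt i ^ (2 * c - 1) ≤ v i ^ (2 * c - 1) := by
      have := Real.rpow_le_rpow_of_nonpos (hv i) (hhigh i) he1
      rwa [Real.mul_rpow hγ0.le (hvt i).le] at this
    have step : γ ^ (2 * c - 1) * vt i ^ (2 * c - 1) * Qvt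
        ≤ v i ^ (2 * c - 1) * (γ ^ (2 * c) * Qv) :=
      mul_le_mul hv_pow2 hQ1 hQvtnn hvpownn
    have hmul := mul_le_mul_of_nonneg_left step (Real.rpow_pos_of_pos hγ0 (-(2*c))).le
    have hA1 : γ ^ (-(2 * c)) * γ ^ (2 * c - 1) = γ⁻¹ := by
      rw [← Real.rpow_add hγ0, show -(2*c) + (2*c - 1) = -1 by ring, Real.rpow_neg_one]
    have hA2 : γ ^ (-(2 * c)) * γ ^ (2 * c) = 1 := by
      rw [← Real.rpow_add hγ0, show -(2*c) + 2*c = 0 by ring, Real.rpow_zero]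
    calc γ⁻¹ * (vt i ^ (2 * c - 1) * Qvt)
        = γ ^ (-(2 * c)) * (γ ^ (2 * c - 1) * vt i ^ (2 * c - 1) * Qvt) := by
          rw [← hA1]; ring
      _ ≤ γ ^ (-(2 * c)) * (v i ^ (2 * c - 1) * (γ ^ (2 * c) * Qv)) := hmul
      _ = (γ ^ (-(2 * c)) * γ ^ (2 * c)) * (v i ^ (2 * c - 1) * Qv) := by ring
      _ = v i ^ (2 * c - 1) * Qv := by rw [hA2, one_mul]
  · -- upper bound
    have hv_pow : v i ^ (2 * c - 1) ≤ γ ^ (1 - 2 * c) * vt i ^ (2 * c - 1) := by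
      have hpos : 0 < γ⁻¹ * vt i := mul_pos (inv_pos.mpr hγ0) (hvt i)
      have h := Real.rpow_le_rpow_of_nonpos hpos (hlow i) he1
      rwa [Real.mul_rpow (inv_nonneg.mpr hγ0.le) (hvt i).le, Real.inv_rpow hγ0.le,
        ← Real.rpow_neg hγ0.le, neg_sub] at h
    have step : v i ^ (2 * c - 1) * Qv
        ≤ γ ^ (1 - 2 * c) * vt i ^ (2 * c - 1) * (γ ^ (2 * c) * Qvt) :=
      mul_le_mul hv_pow hQ2 hQvnn (mul_nonneg (Real.rpow_pos_of_pos hγ0 _).le hvtpownn)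
    have hA3 : γ ^ (1 - 2 * c) * γ ^ (2 * c) = γ := by
      rw [← Real.rpow_add hγ0, show 1 - 2*c + 2*c = 1 by ring, Real.rpow_one]
    calc v i ^ (2 * c - 1) * Qv
        ≤ γ ^ (1 - 2 * c) * vt i ^ (2 * c - 1) * (γ ^ (2 * c) * Qvt) := step
      _ = (γ ^ (1 - 2 * c) * γ ^ (2 * c)) * (vt i ^ (2 * c - 1) * Qvt) := by ring
      _ = γ * (vt i ^ (2 * c - 1) * Qvt) := by rw [hA3]
end

section
/- Let A ∈ ℝ^{n×d} have full column rank, let p ≥ 2, let 0 < ε < 1 and 0 < ε₂ < 1. Suppose w ∈ ℝ^n_{>0} is a one-sided ε-approximate ℓ_p-Lewis weight of A, and suppose s ∈ ℝ^n satisfies (1−ε₂) σ_i(W^{1/2−1/p}A) ≤ s_i ≤ (1+ε₂) σ_i(W^{1/2−1/p}A) for all i ∈ [n]. Define v_i = w_i (s_i/w_i)^{p/2}, and set α = 3ε (p/2 − 1)(1 + ε)^{p/2−1} d and γ = (1−ε₂)^{−p/2}. Then for every i ∈ [n], γ^{-1}(1−α) σ_i(V^{1/2−1/p}A) ≤ v_i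 ≤ γ(1+α) σ_i(V^{1/2−1/p}A), where V = Diag(v). -/
open Matrix BigOperators

/-! ### Auxiliary machinery: quadratic forms, Cauchy–Schwarz, inverse comparison -/

/-- quadratic form -/
noncomputable def qf {d : ℕ} (M : Matrix (Fin d) (Fin d) ℝ) (x : Fin d → ℝ) : ℝ :=
  x ⬝ᵥ (M *ᵥ x)

lemma dot_symm {d : ℕ} {M : Matrix (Fin d) (Fin d) ℝ} (hM : Mᵀ = M) (u v : Fin d → ℝ) :
    u ⬝ᵥ (M *ᵥ v) = (M *ᵥ u) ⬝ᵥ v := by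
  rw [Matrix.dotProduct_mulVec, ← Matrix.vecMul_transpose, hM]

lemma mulVec_inv_cancel_s8 {d : ℕ} {M : Matrix (Fin d) (Fin d) ℝ} (h : IsUnit M.det)
    (x : Fin d → ℝ) : M *ᵥ (M⁻¹ *ᵥ x) = x := by
  rw [Matrix.mulVec_mulVec, Matrix.mul_nonsing_inv _ h, Matrix.one_mulVec]

lemma qf_inv_eq {d : ℕ} {M : Matrix (Fin d) (Fin d) ℝ} (hM : Mᵀ = M) (h : IsUnit M.det)
    (x : Fin d → ℝ) : qf M⁻¹ x = qf M (M⁻¹ *ᵥ x) := by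
  unfold qf
  rw [mulVec_inv_cancel_s8 h, dotProduct_comm]

lemma qf_inv_nonneg {d : ℕ} {M : Matrix (Fin d) (Fin d) ℝ} (hM : Mᵀ = M) (h : IsUnit M.det)
    (hpsd : ∀ z, 0 ≤ qf M z) (x : Fin d → ℝ) : 0 ≤ qf M⁻¹ x := by
  rw [qf_inv_eq hM h]; exact hpsd _

lemma qf_inv_pos {d : ℕ} {M : Matrix (Fin d) (Fin d) ℝ} (hM : Mᵀ = M) (h : IsUnit M.det)
    (hpos : ∀ z, z ≠ 0 → 0 < qf M z) (x : Fin d → ℝ) (hx : x ≠ 0) : 0 < qf M⁻¹ x := by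
  rw [qf_inv_eq hM h]
  refine hpos _ fun h0 => hx ?_
  have := mulVec_inv_cancel_s8 h x
  rw [h0, Matrix.mulVec_zero] at this
  exact this.symm

lemma qf_cs {d : ℕ} {M : Matrix (Fin d) (Fin d) ℝ} (hM : Mᵀ = M) (h : IsUnit M.det)
    (hpsd : ∀ z, 0 ≤ qf M z) (x y : Fin d → ℝ) :
    (y ⬝ᵥ x) ^ 2 ≤ qf M y * qf M⁻¹ x := by
  set z := M⁻¹ *ᵥ x with hz
  have hMz : M *ᵥ z = x := mulVec_inv_cancel_s8 h x
  have hxz : qf M⁻¹ x = x ⬝ᵥ z := rfl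
  have key : ∀ t : ℝ, 0 ≤ (qf M⁻¹ x) * (t * t) + (2 * (y ⬝ᵥ x)) * t + qf M y := by
    intro t
    have h0 : 0 ≤ qf M (y + t • z) := hpsd _
    have expand : qf M (y + t • z)
        = qf M y + t * (y ⬝ᵥ x) + t * ((M *ᵥ y) ⬝ᵥ z) + t * t * (x ⬝ᵥ z) := by
      unfold qf
      rw [Matrix.mulVec_add, Matrix.mulVec_smul]
      simp only [dotProduct_add, add_dotProduct, smul_dotProduct, dotProduct_smul,
        smul_eq_mul, hMz]
      ring_nf
      rw [dotProduct_comm z x, dotProduct_comm z (M *ᵥ y)]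
      ring
    have hcross : (M *ᵥ y) ⬝ᵥ z = y ⬝ᵥ x := by
      rw [← dot_symm hM, hMz]
    rw [expand, hcross] at h0
    rw [hxz]
    linarith
  have hd := discrim_le_zero key
  rw [discrim] at hd
  nlinarith [hd]

lemma qf_inv_comp {d : ℕ} {M N : Matrix (Fin d) (Fin d) ℝ}
    (hMs : Mᵀ = M) (hNs : Nᵀ = N) (hMdet : IsUnit M.det) (hNdet : IsUnit N.det)
    (hMpsd : ∀ z, 0 ≤ qf M z) (hNpsd : ∀ z, 0 ≤ qf N z)
    (c : ℝ) (hc : 0 < c) (h : ∀ z, qf M z ≤ c * qf N z) (x : Fin d → ℝ) :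
    qf N⁻¹ x ≤ c * qf M⁻¹ x := by
  set y := N⁻¹ *ᵥ x with hy
  have h1 : (y ⬝ᵥ x) ^ 2 ≤ qf M y * qf M⁻¹ x := qf_cs hMs hMdet hMpsd x y
  have h3 : qf N y = qf N⁻¹ x := (qf_inv_eq hNs hNdet x).symm
  have h4 : y ⬝ᵥ x = qf N⁻¹ x := by
    rw [dotProduct_comm]; rfl
  have h2 : qf M y ≤ c * qf N⁻¹ x := by rw [← h3]; exact h y
  have hQ : 0 ≤ qf N⁻¹ x := qf_inv_nonneg hNs hNdet hNpsd x
  have hMi : 0 ≤ qf M⁻¹ x := qf_inv_nonneg hMs hMdet hMpsd x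
  rcases eq_or_lt_of_le hQ with h0 | h0
  · rw [← h0]; positivity
  · rw [h4] at h1
    have : qf N⁻¹ x * qf N⁻¹ x ≤ (c * qf M⁻¹ x) * qf N⁻¹ x := by nlinarith
    exact le_of_mul_le_mul_right this h0

lemma lev_eq_qf {n d : ℕ} (C : Matrix (Fin n) (Fin d) ℝ) (i : Fin n) :
    lev C i = qf (Cᵀ * C)⁻¹ (C i) := by
  unfold lev qf
  simp only [Matrix.mul_apply, Matrix.transpose_apply, Matrix.mulVec, dotProduct,
    Finset.sum_mul, Finset.mul_sum]
  rw [Finset.sum_comm]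
  congr 1; ext k
  congr 1; ext l
  ring

lemma qf_tc {n d : ℕ} (C : Matrix (Fin n) (Fin d) ℝ) (x : Fin d → ℝ) :
    qf (Cᵀ * C) x = ∑ j, ((C *ᵥ x) j) ^ 2 := by
  unfold qf
  rw [← Matrix.mulVec_mulVec, Matrix.dotProduct_mulVec, Matrix.vecMul_transpose]
  simp [dotProduct, sq]

lemma tc_symm {n d : ℕ} (C : Matrix (Fin n) (Fin d) ℝ) : (Cᵀ * C)ᵀ = Cᵀ * C := by
  rw [Matrix.transpose_mul, Matrix.transpose_transpose]

lemma sum_lev {n d : ℕ} (C : Matrix (Fin n) (Fin d) ℝ) (h : IsUnit (Cᵀ * C).det) :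
    ∑ i, lev C i = (d : ℝ) := by
  have : ∑ i, lev C i = Matrix.trace (C * (Cᵀ * C)⁻¹ * Cᵀ) := by
    simp [lev, Matrix.trace, Matrix.diag]
  rw [this, Matrix.trace_mul_comm, ← Matrix.mul_assoc, Matrix.mul_assoc Cᵀ,
    ← Matrix.mul_assoc Cᵀ, Matrix.mul_nonsing_inv _ h]
  simp

lemma dpow_mul_apply {n d : ℕ} (u : Fin n → ℝ) (c : ℝ) (A : Matrix (Fin n) (Fin d) ℝ)
    (i : Fin n) (k : Fin d) : (dpow u c * A) i k = u i ^ c * A i k := by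
  simp [dpow, Matrix.diagonal_mul]

lemma dpow_mulVec {n d : ℕ} (u : Fin n → ℝ) (c : ℝ) (A : Matrix (Fin n) (Fin d) ℝ)
    (x : Fin d → ℝ) (j : Fin n) : ((dpow u c * A) *ᵥ x) j = u j ^ c * ((A *ᵥ x) j) := by
  rw [← Matrix.mulVec_mulVec]
  simp [dpow, Matrix.mulVec_diagonal]

lemma dpow_row {n d : ℕ} (u : Fin n → ℝ) (c : ℝ) (A : Matrix (Fin n) (Fin d) ℝ)
    (i : Fin n) : (dpow u c * A) i = (u i ^ c) • (A i) := by
  funext k; simp [dpow_mul_apply, Pi.smul_apply, smul_eq_mul]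

lemma qf_smul {d : ℕ} (M : Matrix (Fin d) (Fin d) ℝ) (a : ℝ) (z : Fin d → ℝ) :
    qf M (a • z) = a ^ 2 * qf M z := by
  unfold qf
  rw [Matrix.mulVec_smul]
  simp [smul_dotProduct, dotProduct_smul, smul_eq_mul, sq]
  ring

lemma rank_inj {n d : ℕ} (A : Matrix (Fin n) (Fin d) ℝ) (hA : A.rank = d)
    (x : Fin d → ℝ) (hx : A *ᵥ x = 0) : x = 0 := by
  have h1 : LinearMap.ker A.mulVecLin = ⊥ := by
    have h2 := LinearMap.finrank_range_add_finrank_ker A.mulVecLin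
    rw [show Module.finrank ℝ (Fin d → ℝ) = d by simp] at h2
    have h3 : Module.finrank ℝ (LinearMap.range A.mulVecLin) = d := hA
    have hk : Module.finrank ℝ (LinearMap.ker A.mulVecLin) = 0 := by omega
    exact Submodule.finrank_eq_zero.mp hk
  exact LinearMap.ker_eq_bot'.mp h1 x hx

lemma rpow_sq (x : ℝ) (hx : 0 ≤ x) (q : ℝ) : (x ^ q) ^ 2 = x ^ (q * 2) := by
  rw [← Real.rpow_natCast (x ^ q) 2, ← Real.rpow_mul hx]
  norm_num

lemma sub_one_le_mul_log {a : ℝ} (ha : 0 < a) : a - 1 ≤ a * Real.log a := by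
  have h := Real.log_le_sub_one_of_pos (inv_pos.mpr ha)
  rw [Real.log_inv] at h
  have h' : 1 - a⁻¹ ≤ Real.log a := by linarith
  calc a - 1 = a * (1 - a⁻¹) := by field_simp
  _ ≤ a * Real.log a := by nlinarith

lemma lem_max_pow_sub_one {t r e : ℝ} (ht : 0 ≤ t) (htle : t ≤ 1 + e) (hr : 0 ≤ r)
    (he : 0 < e) : max (t ^ r - 1) 0 ≤ e * r * (1 + e) ^ r := by
  apply max_le _ (by positivity)
  rcases le_or_gt (t ^ r) 1 with h | h
  · have hb : (0:ℝ) ≤ e * r * (1 + e) ^ r := by positivity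
    linarith
  · have htpos : 0 < t := by
      rcases eq_or_lt_of_le ht with h0 | h0
      · exfalso
        rcases eq_or_ne r 0 with hrr | hrr
        · rw [hrr, Real.rpow_zero] at h; linarith
        · rw [← h0, Real.zero_rpow hrr] at h; linarith
      · exact h0
    have ht1 : 1 < t := by
      by_contra hle
      push_neg at hle
      have := Real.rpow_le_one ht hle hr
      linarith
    have hlogpos := Real.log_pos ht1
    have hlogle : Real.log t ≤ e :=
      le_trans (Real.log_le_sub_one_of_pos htpos) (by linarith)
    have h1 : t ^ r - 1 ≤ t ^ r * (r * Real.log t) := by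
      have h2 := sub_one_le_mul_log (Real.rpow_pos_of_pos htpos r)
      rwa [Real.log_rpow htpos] at h2
    have htr_le : t ^ r ≤ (1 + e) ^ r := Real.rpow_le_rpow ht htle hr
    calc t ^ r - 1 ≤ t ^ r * (r * Real.log t) := h1
    _ ≤ (1 + e) ^ r * (r * Real.log t) :=
        mul_le_mul_of_nonneg_right htr_le (by positivity)
    _ ≤ (1 + e) ^ r * (r * e) :=
        mul_le_mul_of_nonneg_left (mul_le_mul_of_nonneg_left hlogle hr) (by positivity)
    _ = e * r * (1 + e) ^ r := by ring

lemma lem_weighted_one_sub_pow {σ w r e : ℝ} (hσ : 0 ≤ σ) (hw : 0 < w)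
    (hσw : σ ≤ (1 + e) * w) (hr : 0 ≤ r) (he : 0 ≤ e) :
    σ * max (1 - (σ / w) ^ r) 0 ≤ r * ((w - σ) + e * w) := by
  rcases eq_or_lt_of_le hσ with h0 | h0
  · rw [← h0]
    simp only [zero_mul, sub_zero]
    positivity
  · have htpos : 0 < σ / w := div_pos h0 hw
    have htnn := htpos.le
    have hστ' : σ / w * w = σ := div_mul_cancel₀ _ hw.ne'
    rcases le_or_gt 1 (σ / w) with ht1 | ht1
    · have htr : 1 ≤ (σ / w) ^ r := by
        rw [← Real.one_rpow r]
        exact Real.rpow_le_rpow zero_le_one ht1 hr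
      rw [max_eq_right (by linarith)]
      have hX : 0 ≤ (w - σ) + e * w := by nlinarith
      nlinarith [mul_nonneg hr hX]
    · have htr1 : (σ / w) ^ r ≤ 1 := Real.rpow_le_one htnn ht1.le hr
      rw [max_eq_left (by linarith)]
      have hlog1 : 1 - (σ / w) ^ r ≤ r * (-Real.log (σ / w)) := by
        have h2 := Real.log_le_sub_one_of_pos (Real.rpow_pos_of_pos htpos r)
        rw [Real.log_rpow htpos] at h2
        linarith
      have hlog2 : (σ / w) * (-Real.log (σ / w)) ≤ 1 - σ / w := by
        have h2 := Real.log_le_sub_one_of_pos (inv_pos.mpr htpos)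
        rw [Real.log_inv] at h2
        have h3 := mul_le_mul_of_nonneg_left h2 htpos.le
        calc (σ / w) * (-Real.log (σ / w)) ≤ (σ / w) * ((σ / w)⁻¹ - 1) := h3
        _ = 1 - σ / w := by field_simp
      have hchain : σ * (1 - (σ / w) ^ r) ≤ r * (w - σ) := by
        calc σ * (1 - (σ / w) ^ r) = w * ((σ / w) * (1 - (σ / w) ^ r)) := by
              rw [show w * ((σ / w) * (1 - (σ / w) ^ r)) = (σ / w * w) * (1 - (σ / w) ^ r) by ring,
                hστ']
        _ ≤ w * ((σ / w) * (r * (-Real.log (σ / w)))) := by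
            apply mul_le_mul_of_nonneg_left _ hw.le
            exact mul_le_mul_of_nonneg_left hlog1 htnn
        _ = (r * w) * ((σ / w) * (-Real.log (σ / w))) := by ring
        _ ≤ (r * w) * (1 - σ / w) := by
            apply mul_le_mul_of_nonneg_left hlog2 (by positivity)
        _ = r * (w - σ / w * w) := by ring
        _ = r * (w - σ) := by rw [hστ']
      have hnn : 0 ≤ r * (e * w) := mul_nonneg hr (mul_nonneg he hw.le)
      linarith

set_option maxHeartbeats 3200000 in
theorem two_sided_from_approx_scores {n d : ℕ} (A : Matrix (Fin n) (Fin d) ℝ)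
    (hA : A.rank = d) (p : ℝ) (hp : 2 ≤ p)
    (ε : ℝ) (hε : 0 < ε) (hε1 : ε < 1) (ε₂ : ℝ) (hε₂ : 0 < ε₂) (hε₂1 : ε₂ < 1)
    (w : Fin n → ℝ) (hw : ∀ i, 0 < w i)
    (hone : ∀ i, lev (dpow w (1 / 2 - 1 / p) * A) i ≤ (1 + ε) * w i)
    (hsum : ∑ i, |w i| ≤ (1 + ε) * d)
    (s : Fin n → ℝ)
    (hs : ∀ i, (1 - ε₂) * lev (dpow w (1 / 2 - 1 / p) * A) i ≤ s i ∧
      s i ≤ (1 + ε₂) * lev (dpow w (1 / 2 - 1 / p) * A) i)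
    (v : Fin n → ℝ) (hv : ∀ i, v i = w i * (s i / w i) ^ (p / 2))
    (α : ℝ) (hα : α = 3 * ε * (p / 2 - 1) * (1 + ε) ^ (p / 2 - 1) * d)
    (γ : ℝ) (hγ : γ = (1 - ε₂) ^ (-(p / 2))) :
    ∀ i, γ⁻¹ * (1 - α) * lev (dpow v (1 / 2 - 1 / p) * A) i ≤ v i ∧
      v i ≤ γ * (1 + α) * lev (dpow v (1 / 2 - 1 / p) * A) i := by
  have hp0 : (0 : ℝ) < p := by linarith
  set c : ℝ := 1 / 2 - 1 / p with hc_def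
  set r : ℝ := p / 2 - 1 with hr_def
  have hr0 : 0 ≤ r := by rw [hr_def]; linarith
  have hc0 : 0 ≤ c := by
    have h2p : 1 / p ≤ 1 / 2 := by
      apply one_div_le_one_div_of_le <;> linarith
    rw [hc_def]; linarith
  set B := dpow w c * A with hB_def
  set C := dpow v c * A with hC_def
  clear_value c r B C
  have hAinj : ∀ x, A *ᵥ x = 0 → x = 0 := rank_inj A hA
  have hwc : ∀ j, 0 < w j ^ c := fun j => Real.rpow_pos_of_pos (hw j) c
  have hBmv : ∀ (x : Fin d → ℝ) j, (B *ᵥ x) j = w j ^ c * ((A *ᵥ x) j) := by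
    intro x j; rw [hB_def]; exact dpow_mulVec w c A x j
  have hBinj : ∀ x, B *ᵥ x = 0 → x = 0 := by
    intro x hx
    apply hAinj
    funext j
    have hj := congrFun hx j
    rw [hBmv x j] at hj
    have := mul_eq_zero.mp hj
    simpa [(hwc j).ne'] using this
  have hNsym : (Bᵀ * B)ᵀ = Bᵀ * B := tc_symm B
  have hqN : ∀ x, qf (Bᵀ * B) x = ∑ j, (w j ^ c) ^ 2 * ((A *ᵥ x) j) ^ 2 := by
    intro x
    rw [qf_tc]
    refine Finset.sum_congr rfl fun j _ => ?_
    rw [hBmv x j]; ring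
  have hqNnn : ∀ x, 0 ≤ qf (Bᵀ * B) x := by
    intro x; rw [hqN]; positivity
  have hqNpos : ∀ x, x ≠ 0 → 0 < qf (Bᵀ * B) x := by
    intro x hx
    rw [qf_tc]
    have hBx : B *ᵥ x ≠ 0 := fun h => hx (hBinj x h)
    obtain ⟨j, hj⟩ : ∃ j, (B *ᵥ x) j ≠ 0 := by
      by_contra h; push_neg at h; exact hBx (funext h)
    exact Finset.sum_pos' (fun j _ => sq_nonneg _) ⟨j, Finset.mem_univ j, by positivity⟩
  have hNdet : IsUnit (Bᵀ * B).det := by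
    rw [isUnit_iff_ne_zero]
    intro h
    obtain ⟨x, hx0, hx⟩ := (Matrix.exists_mulVec_eq_zero_iff).mpr h
    have hpos := hqNpos x hx0
    unfold qf at hpos
    rw [hx, dotProduct_zero] at hpos
    exact lt_irrefl _ hpos
  have hσ : ∀ j, lev B j = (w j ^ c) ^ 2 * qf (Bᵀ * B)⁻¹ (A j) := by
    intro j
    rw [lev_eq_qf, show B j = (w j ^ c) • (A j) from by rw [hB_def]; exact dpow_row w c A j,
      qf_smul]
  have hσnn : ∀ j, 0 ≤ lev B j := by
    intro j
    rw [lev_eq_qf]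
    exact qf_inv_nonneg hNsym hNdet hqNnn _
  have hrowzero : ∀ j, lev B j = 0 → A j = 0 := by
    intro j hj
    by_contra hAj
    have hBj : B j ≠ 0 := by
      rw [hB_def, dpow_row w c A j]
      simp only [ne_eq, smul_eq_zero, not_or]
      exact ⟨(hwc j).ne', hAj⟩
    have := qf_inv_pos hNsym hNdet hqNpos (B j) hBj
    rw [← lev_eq_qf, hj] at this
    exact lt_irrefl _ this
  have hCS : ∀ j (x : Fin d → ℝ), ((B *ᵥ x) j) ^ 2 ≤ lev B j * qf (Bᵀ * B) x := by
    intro j x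
    have h1 := qf_cs hNsym hNdet hqNnn (B j) x
    rw [lev_eq_qf]
    have h2 : (B *ᵥ x) j = x ⬝ᵥ (B j) := by
      rw [dotProduct_comm]; rfl
    rw [h2]
    nlinarith [h1]
  have hsumlev : ∑ j, lev B j = (d : ℝ) := sum_lev B hNdet
  have hsumw : ∑ j, w j ≤ (1 + ε) * d := by
    calc ∑ j, w j = ∑ j, |w j| := Finset.sum_congr rfl fun j _ => (abs_of_pos (hw j)).symm
    _ ≤ (1 + ε) * d := hsum
  have hsnn : ∀ j, 0 ≤ s j := by
    intro j
    have := (hs j).1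
    nlinarith [hσnn j]
  have hvnn : ∀ j, 0 ≤ v j := by
    intro j
    rw [hv j]
    have := Real.rpow_nonneg (div_nonneg (hsnn j) (hw j).le) (p / 2)
    nlinarith [(hw j).le]
  have hd0 : (0:ℝ) ≤ d := Nat.cast_nonneg d
  have hτnn : ∀ j, 0 ≤ lev B j / w j := fun j => div_nonneg (hσnn j) (hw j).le
  have hτle : ∀ j, lev B j / w j ≤ 1 + ε := by
    intro j; rw [div_le_iff₀ (hw j)]; linarith [hone j]
  set Sp := ∑ j, lev B j * max ((lev B j / w j) ^ r - 1) 0 with hSp_def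
  set Sm := ∑ j, lev B j * max (1 - (lev B j / w j) ^ r) 0 with hSm_def
  clear_value Sp Sm
  have hSpnn : 0 ≤ Sp := by
    rw [hSp_def]
    exact Finset.sum_nonneg fun j _ => mul_nonneg (hσnn j) (le_max_right _ _)
  have hSmnn : 0 ≤ Sm := by
    rw [hSm_def]
    exact Finset.sum_nonneg fun j _ => mul_nonneg (hσnn j) (le_max_right _ _)
  have hSp_le : Sp ≤ ε * r * (1 + ε) ^ r * d := by
    rw [hSp_def]
    have h1 : (∑ j, lev B j * max ((lev B j / w j) ^ r - 1) 0) ≤ ∑ j, lev B j * (ε * r * (1 + ε) ^ r) := by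
      refine Finset.sum_le_sum fun j _ => ?_
      exact mul_le_mul_of_nonneg_left
        (lem_max_pow_sub_one (hτnn j) (hτle j) hr0 hε) (hσnn j)
    rw [← Finset.sum_mul, hsumlev] at h1
    linarith [h1]
  have hSm_le : Sm ≤ 3 * r * ε * d := by
    rw [hSm_def]
    have h1 : (∑ j, lev B j * max (1 - (lev B j / w j) ^ r) 0) ≤ ∑ j, r * ((w j - lev B j) + ε * w j) := by
      refine Finset.sum_le_sum fun j _ => ?_
      exact lem_weighted_one_sub_pow (hσnn j) (hw j) (hone j) hr0 hε.le
    have h2 : ∑ j, r * ((w j - lev B j) + ε * w j)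
        = r * ((∑ j, w j) - (∑ j, lev B j) + ε * (∑ j, w j)) := by
      rw [← Finset.mul_sum]
      congr 1
      rw [Finset.sum_add_distrib, Finset.sum_sub_distrib, ← Finset.mul_sum]
    rw [h2, hsumlev] at h1
    have e1 := mul_le_mul_of_nonneg_left hsumw hε.le
    have e2 : 0 ≤ ε * (1 - ε) * d :=
      mul_nonneg (mul_nonneg hε.le (by linarith)) hd0
    have h3 : (∑ j, w j) - (d:ℝ) + ε * (∑ j, w j) ≤ 3 * ε * d := by nlinarith
    have h4 := mul_le_mul_of_nonneg_left h3 hr0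
    have h5 : r * (3 * ε * (d:ℝ)) = 3 * r * ε * d := by ring
    linarith
  have h1εr : 1 ≤ (1 + ε) ^ r := by
    have h := Real.rpow_le_rpow zero_le_one (show (1:ℝ) ≤ 1 + ε by linarith) hr0
    rwa [Real.one_rpow] at h
  have hXnn : (0:ℝ) ≤ ε * r * (1 + ε) ^ r * d :=
    mul_nonneg (mul_nonneg (mul_nonneg hε.le hr0) (by linarith : (0:ℝ) ≤ (1 + ε) ^ r)) hd0
  have hαnn : 0 ≤ α := by rw [hα]; linarith [hXnn]
  have hSpα : Sp ≤ α := by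
    rw [hα]; linarith [hSp_le, hXnn]
  have hSmα : Sm ≤ α := by
    rw [hα]
    have h2 := mul_le_mul_of_nonneg_left h1εr
      (mul_nonneg (mul_nonneg (by linarith : (0:ℝ) ≤ 3 * r) hε.le) hd0 :
        (0:ℝ) ≤ 3 * r * ε * d)
    have h3 : 3 * r * ε * (d:ℝ) * ((1 + ε) ^ r) = 3 * ε * r * (1 + ε) ^ r * d := by ring
    linarith [hSm_le]
  -- C-side facts
  have hCmv : ∀ (x : Fin d → ℝ) j, (C *ᵥ x) j = v j ^ c * ((A *ᵥ x) j) := by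
    intro x j; rw [hC_def]; exact dpow_mulVec v c A x j
  have hMsym : (Cᵀ * C)ᵀ = Cᵀ * C := tc_symm C
  have hqM : ∀ x, qf (Cᵀ * C) x = ∑ j, (v j ^ c) ^ 2 * ((A *ᵥ x) j) ^ 2 := by
    intro x
    rw [qf_tc]
    refine Finset.sum_congr rfl fun j _ => ?_
    rw [hCmv x j]; ring
  have hqMnn : ∀ x, 0 ≤ qf (Cᵀ * C) x := by
    intro x; rw [hqM]; positivity
  have hexp : p / 2 * (c * 2) = r := by
    rw [hc_def, hr_def]; field_simp
  have hV2 : ∀ j, (v j ^ c) ^ 2 = (s j / w j) ^ r * (w j ^ c) ^ 2 := by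
    intro j
    have ht : 0 ≤ s j / w j := div_nonneg (hsnn j) (hw j).le
    have htp : 0 ≤ (s j / w j) ^ (p / 2) := Real.rpow_nonneg ht _
    calc (v j ^ c) ^ 2 = ((w j * (s j / w j) ^ (p / 2)) ^ c) ^ 2 := by rw [hv j]
    _ = (w j ^ c * ((s j / w j) ^ (p / 2)) ^ c) ^ 2 := by
        rw [Real.mul_rpow (hw j).le htp]
    _ = (w j ^ c) ^ 2 * (((s j / w j) ^ (p / 2)) ^ c) ^ 2 := by ring
    _ = (w j ^ c) ^ 2 * ((s j / w j) ^ (p / 2)) ^ (c * 2) := by rw [rpow_sq _ htp c]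
    _ = (w j ^ c) ^ 2 * (s j / w j) ^ (p / 2 * (c * 2)) := by rw [← Real.rpow_mul ht]
    _ = (s j / w j) ^ r * (w j ^ c) ^ 2 := by rw [hexp]; ring
  have ht_up : ∀ j, s j / w j ≤ (1 + ε₂) * (lev B j / w j) := by
    intro j
    rw [← mul_div_assoc]
    exact (div_le_div_iff_of_pos_right (hw j)).mpr (hs j).2
  have ht_lo : ∀ j, (1 - ε₂) * (lev B j / w j) ≤ s j / w j := by
    intro j
    rw [← mul_div_assoc]
    exact (div_le_div_iff_of_pos_right (hw j)).mpr (hs j).1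
  have hP2nn : (0:ℝ) ≤ (1 + ε₂) ^ r := Real.rpow_nonneg (by linarith) r
  have hP2nn' : (0:ℝ) ≤ (1 - ε₂) ^ r := Real.rpow_nonneg (by linarith) r
  have hcomp_up : ∀ x, qf (Cᵀ * C) x ≤ ((1 + ε₂) ^ r * (1 + Sp)) * qf (Bᵀ * B) x := by
    intro x
    have per : ∀ j ∈ Finset.univ, (v j ^ c) ^ 2 * ((A *ᵥ x) j) ^ 2
        ≤ (1 + ε₂) ^ r * ((w j ^ c) ^ 2 * ((A *ᵥ x) j) ^ 2
            + (lev B j * max ((lev B j / w j) ^ r - 1) 0) * qf (Bᵀ * B) x) := by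
      intro j _
      have hE : (w j ^ c) ^ 2 * ((A *ᵥ x) j) ^ 2 ≤ lev B j * qf (Bᵀ * B) x := by
        have h1 := hCS j x
        rw [hBmv x j] at h1
        calc (w j ^ c) ^ 2 * ((A *ᵥ x) j) ^ 2 = (w j ^ c * (A *ᵥ x) j) ^ 2 := by ring
        _ ≤ _ := h1
      have hEnn : 0 ≤ (w j ^ c) ^ 2 * ((A *ᵥ x) j) ^ 2 := by positivity
      have ht : 0 ≤ s j / w j := div_nonneg (hsnn j) (hw j).le
      have h2 : (s j / w j) ^ r ≤ (1 + ε₂) ^ r * (lev B j / w j) ^ r := by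
        have h3 := Real.rpow_le_rpow ht (ht_up j) hr0
        rwa [Real.mul_rpow (by linarith : (0:ℝ) ≤ 1 + ε₂) (hτnn j)] at h3
      have h3 : (lev B j / w j) ^ r ≤ 1 + max ((lev B j / w j) ^ r - 1) 0 := by
        have := le_max_left ((lev B j / w j) ^ r - 1) 0
        linarith
      have hm : 0 ≤ max ((lev B j / w j) ^ r - 1) 0 := le_max_right _ _
      rw [hV2 j]
      calc (s j / w j) ^ r * (w j ^ c) ^ 2 * ((A *ᵥ x) j) ^ 2
          = (s j / w j) ^ r * ((w j ^ c) ^ 2 * ((A *ᵥ x) j) ^ 2) := by ring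
      _ ≤ ((1 + ε₂) ^ r * (lev B j / w j) ^ r) * ((w j ^ c) ^ 2 * ((A *ᵥ x) j) ^ 2) :=
          mul_le_mul_of_nonneg_right h2 hEnn
      _ = (1 + ε₂) ^ r * ((lev B j / w j) ^ r * ((w j ^ c) ^ 2 * ((A *ᵥ x) j) ^ 2)) := by
          ring
      _ ≤ (1 + ε₂) ^ r * ((1 + max ((lev B j / w j) ^ r - 1) 0)
            * ((w j ^ c) ^ 2 * ((A *ᵥ x) j) ^ 2)) :=
          mul_le_mul_of_nonneg_left (mul_le_mul_of_nonneg_right h3 hEnn) hP2nn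
      _ ≤ (1 + ε₂) ^ r * ((w j ^ c) ^ 2 * ((A *ᵥ x) j) ^ 2
            + (lev B j * max ((lev B j / w j) ^ r - 1) 0) * qf (Bᵀ * B) x) := by
          apply mul_le_mul_of_nonneg_left _ hP2nn
          have h5 := mul_le_mul_of_nonneg_left hE hm
          nlinarith [h5]
    have hsum_le := Finset.sum_le_sum per
    calc qf (Cᵀ * C) x = ∑ j, (v j ^ c) ^ 2 * ((A *ᵥ x) j) ^ 2 := hqM x
    _ ≤ ∑ j, (1 + ε₂) ^ r * ((w j ^ c) ^ 2 * ((A *ᵥ x) j) ^ 2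
          + (lev B j * max ((lev B j / w j) ^ r - 1) 0) * qf (Bᵀ * B) x) := hsum_le
    _ = (1 + ε₂) ^ r * ((∑ j, (w j ^ c) ^ 2 * ((A *ᵥ x) j) ^ 2)
          + (∑ j, lev B j * max ((lev B j / w j) ^ r - 1) 0) * qf (Bᵀ * B) x) := by
        rw [← Finset.mul_sum, Finset.sum_add_distrib, ← Finset.sum_mul]
    _ = (1 + ε₂) ^ r * (qf (Bᵀ * B) x + Sp * qf (Bᵀ * B) x) := by
        rw [← hqN x, ← hSp_def]
    _ = ((1 + ε₂) ^ r * (1 + Sp)) * qf (Bᵀ * B) x := by ring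
  have hcomp_lo : ∀ x, ((1 - ε₂) ^ r * (1 - Sm)) * qf (Bᵀ * B) x ≤ qf (Cᵀ * C) x := by
    intro x
    have per : ∀ j ∈ Finset.univ, (1 - ε₂) ^ r * ((w j ^ c) ^ 2 * ((A *ᵥ x) j) ^ 2
          - (lev B j * max (1 - (lev B j / w j) ^ r) 0) * qf (Bᵀ * B) x)
        ≤ (v j ^ c) ^ 2 * ((A *ᵥ x) j) ^ 2 := by
      intro j _
      have hE : (w j ^ c) ^ 2 * ((A *ᵥ x) j) ^ 2 ≤ lev B j * qf (Bᵀ * B) x := by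
        have h1 := hCS j x
        rw [hBmv x j] at h1
        calc (w j ^ c) ^ 2 * ((A *ᵥ x) j) ^ 2 = (w j ^ c * (A *ᵥ x) j) ^ 2 := by ring
        _ ≤ _ := h1
      have hEnn : 0 ≤ (w j ^ c) ^ 2 * ((A *ᵥ x) j) ^ 2 := by positivity
      have ht : 0 ≤ s j / w j := div_nonneg (hsnn j) (hw j).le
      have h2 : (1 - ε₂) ^ r * (lev B j / w j) ^ r ≤ (s j / w j) ^ r := by
        have h3 := Real.rpow_le_rpow
          (mul_nonneg (by linarith : (0:ℝ) ≤ 1 - ε₂) (hτnn j)) (ht_lo j) hr0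
        rwa [Real.mul_rpow (by linarith : (0:ℝ) ≤ 1 - ε₂) (hτnn j)] at h3
      have h3 : 1 - max (1 - (lev B j / w j) ^ r) 0 ≤ (lev B j / w j) ^ r := by
        have := le_max_left (1 - (lev B j / w j) ^ r) 0
        linarith
      have hm : 0 ≤ max (1 - (lev B j / w j) ^ r) 0 := le_max_right _ _
      rw [hV2 j]
      have h5 := mul_le_mul_of_nonneg_left hE hm
      calc (1 - ε₂) ^ r * ((w j ^ c) ^ 2 * ((A *ᵥ x) j) ^ 2
            - (lev B j * max (1 - (lev B j / w j) ^ r) 0) * qf (Bᵀ * B) x)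
          ≤ (1 - ε₂) ^ r * ((1 - max (1 - (lev B j / w j) ^ r) 0)
            * ((w j ^ c) ^ 2 * ((A *ᵥ x) j) ^ 2)) := by
            apply mul_le_mul_of_nonneg_left _ hP2nn'
            nlinarith [h5]
      _ ≤ (1 - ε₂) ^ r * ((lev B j / w j) ^ r * ((w j ^ c) ^ 2 * ((A *ᵥ x) j) ^ 2)) :=
          mul_le_mul_of_nonneg_left (mul_le_mul_of_nonneg_right h3 hEnn) hP2nn'
      _ = ((1 - ε₂) ^ r * (lev B j / w j) ^ r) * ((w j ^ c) ^ 2 * ((A *ᵥ x) j) ^ 2) := by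
          ring
      _ ≤ (s j / w j) ^ r * ((w j ^ c) ^ 2 * ((A *ᵥ x) j) ^ 2) :=
          mul_le_mul_of_nonneg_right h2 hEnn
      _ = (s j / w j) ^ r * (w j ^ c) ^ 2 * ((A *ᵥ x) j) ^ 2 := by ring
    have hsum_le := Finset.sum_le_sum per
    calc ((1 - ε₂) ^ r * (1 - Sm)) * qf (Bᵀ * B) x
        = (1 - ε₂) ^ r * (qf (Bᵀ * B) x - Sm * qf (Bᵀ * B) x) := by ring
    _ = (1 - ε₂) ^ r * ((∑ j, (w j ^ c) ^ 2 * ((A *ᵥ x) j) ^ 2)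
          - (∑ j, lev B j * max (1 - (lev B j / w j) ^ r) 0) * qf (Bᵀ * B) x) := by
        rw [← hqN x, ← hSm_def]
    _ = ∑ j, (1 - ε₂) ^ r * ((w j ^ c) ^ 2 * ((A *ᵥ x) j) ^ 2
          - (lev B j * max (1 - (lev B j / w j) ^ r) 0) * qf (Bᵀ * B) x) := by
        rw [← Finset.mul_sum, Finset.sum_sub_distrib, ← Finset.sum_mul]
    _ ≤ ∑ j, (v j ^ c) ^ 2 * ((A *ᵥ x) j) ^ 2 := hsum_le
    _ = qf (Cᵀ * C) x := (hqM x).symm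
  have hqMpos : ∀ x, x ≠ 0 → 0 < qf (Cᵀ * C) x := by
    intro x hx
    rcases eq_or_lt_of_le (hqMnn x) with h0 | h0
    · exfalso
      have hall : ∀ j ∈ Finset.univ, (v j ^ c) ^ 2 * ((A *ᵥ x) j) ^ 2 = 0 := by
        apply (Finset.sum_eq_zero_iff_of_nonneg (fun j _ => by positivity)).mp
        rw [← hqM x, ← h0]
      have hAx : A *ᵥ x = 0 := by
        funext j
        by_contra hj
        have hterm := hall j (Finset.mem_univ j)
        have hvc0 : v j ^ c = 0 := by
          rcases mul_eq_zero.mp hterm with hcase | hcase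
          · exact sq_eq_zero_iff.mp hcase
          · exact absurd (sq_eq_zero_iff.mp hcase) hj
        rcases eq_or_ne c 0 with hc' | hc'
        · rw [hc', Real.rpow_zero] at hvc0; norm_num at hvc0
        · have hvj : v j = 0 := by
            by_contra hv0
            have hpos : 0 < v j := lt_of_le_of_ne (hvnn j) (Ne.symm hv0)
            exact (Real.rpow_pos_of_pos hpos c).ne' hvc0
          rw [hv j] at hvj
          have htp0 : (s j / w j) ^ (p / 2) = 0 :=
            (mul_eq_zero.mp hvj).resolve_left (hw j).ne'
          have ht0 : s j / w j = 0 := by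
            by_contra hts
            have htpos : 0 < s j / w j :=
              lt_of_le_of_ne (div_nonneg (hsnn j) (hw j).le) (Ne.symm hts)
            exact (Real.rpow_pos_of_pos htpos _).ne' htp0
          have hs0 : s j = 0 := (div_eq_zero_iff.mp ht0).resolve_right (hw j).ne'
          have hσ0 : lev B j = 0 := by
            have h1 := (hs j).1
            rw [hs0] at h1
            nlinarith [hσnn j]
          have hAj := hrowzero j hσ0
          have hAxj : (A *ᵥ x) j = 0 := by
            have he : (A *ᵥ x) j = A j ⬝ᵥ x := rfl
            rw [he, hAj, zero_dotProduct]
          exact hj hAxj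
      exact hx (hAinj x hAx)
    · exact h0
  have hMdet : IsUnit (Cᵀ * C).det := by
    rw [isUnit_iff_ne_zero]
    intro h
    obtain ⟨x, hx0, hx⟩ := (Matrix.exists_mulVec_eq_zero_iff).mpr h
    have hpos := hqMpos x hx0
    unfold qf at hpos
    rw [hx, dotProduct_zero] at hpos
    exact lt_irrefl _ hpos
  have hcplus_pos : 0 < (1 + ε₂) ^ r * (1 + Sp) :=
    mul_pos (Real.rpow_pos_of_pos (by linarith) r) (by linarith)
  have hβδ : ∀ z, qf (Bᵀ * B)⁻¹ z ≤ ((1 + ε₂) ^ r * (1 + Sp)) * qf (Cᵀ * C)⁻¹ z :=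
    qf_inv_comp hMsym hNsym hMdet hNdet hqMnn hqNnn _ hcplus_pos hcomp_up
  have hγpos : 0 < γ := by rw [hγ]; exact Real.rpow_pos_of_pos (by linarith) _
  intro i
  have htr_nn : 0 ≤ (s i / w i) ^ r := Real.rpow_nonneg (div_nonneg (hsnn i) (hw i).le) r
  have hδ : lev C i = (v i ^ c) ^ 2 * qf (Cᵀ * C)⁻¹ (A i) := by
    rw [lev_eq_qf, show C i = (v i ^ c) • (A i) from by rw [hC_def]; exact dpow_row v c A i,
      qf_smul]
  have hδnn : 0 ≤ qf (Cᵀ * C)⁻¹ (A i) := qf_inv_nonneg hMsym hMdet hqMnn _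
  have hβnn : 0 ≤ qf (Bᵀ * B)⁻¹ (A i) := qf_inv_nonneg hNsym hNdet hqNnn _
  have hlevCnn : 0 ≤ lev C i := by rw [hδ]; positivity
  have hti : v i = s i * (s i / w i) ^ r := by
    rw [hv i]
    rcases eq_or_lt_of_le (div_nonneg (hsnn i) (hw i).le) with h0 | h0
    · have hs0 : s i = 0 := (div_eq_zero_iff.mp h0.symm).resolve_right (hw i).ne'
      rw [hs0, zero_div, Real.zero_rpow (by positivity : p / 2 ≠ 0)]
      ring
    · rw [show p / 2 = 1 + r from by rw [hr_def]; ring, Real.rpow_add h0, Real.rpow_one,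
        show w i * (s i / w i * (s i / w i) ^ r) = s i / w i * w i * (s i / w i) ^ r from by
          ring, div_mul_cancel₀ _ (hw i).ne']
  constructor
  · -- lower bound
    by_cases hα1 : 1 ≤ α
    · have h1 : γ⁻¹ * (1 - α) ≤ 0 :=
        mul_nonpos_of_nonneg_of_nonpos (inv_pos.mpr hγpos).le (by linarith)
      calc γ⁻¹ * (1 - α) * lev C i ≤ 0 := mul_nonpos_of_nonpos_of_nonneg h1 hlevCnn
      _ ≤ v i := hvnn i
    · push_neg at hα1
      have hcm_pos : 0 < (1 - ε₂) ^ r * (1 - Sm) :=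
        mul_pos (Real.rpow_pos_of_pos (by linarith) r) (by linarith [hSmα])
      have hNM : ∀ z, qf (Bᵀ * B) z ≤ ((1 - ε₂) ^ r * (1 - Sm))⁻¹ * qf (Cᵀ * C) z := by
        intro z
        rw [inv_mul_eq_div, le_div_iff₀ hcm_pos, mul_comm]
        exact hcomp_lo z
      have hδβ : qf (Cᵀ * C)⁻¹ (A i)
          ≤ ((1 - ε₂) ^ r * (1 - Sm))⁻¹ * qf (Bᵀ * B)⁻¹ (A i) :=
        qf_inv_comp hNsym hMsym hNdet hMdet hqNnn hqMnn _ (inv_pos.mpr hcm_pos) hNM (A i)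
      have hγinv : γ⁻¹ = (1 - ε₂) * (1 - ε₂) ^ r := by
        rw [hγ, ← Real.rpow_neg (by linarith : (0:ℝ) ≤ 1 - ε₂), neg_neg,
          show p / 2 = 1 + r from by rw [hr_def]; ring,
          Real.rpow_add (by linarith : (0:ℝ) < 1 - ε₂), Real.rpow_one]
      have hne1 : ((1:ℝ) - ε₂) ^ r ≠ 0 := ne_of_gt (Real.rpow_pos_of_pos (by linarith) r)
      have hne2 : (1:ℝ) - α ≠ 0 := ne_of_gt (by linarith)
      have keyγ : γ⁻¹ * (1 - α) * ((1 - ε₂) ^ r * (1 - Sm))⁻¹ ≤ 1 - ε₂ := by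
        rw [hγinv]
        have hcm_ge : (1 - ε₂) ^ r * (1 - α) ≤ (1 - ε₂) ^ r * (1 - Sm) :=
          mul_le_mul_of_nonneg_left (by linarith [hSmα]) hP2nn'
        have h2 : ((1 - ε₂) ^ r * (1 - Sm))⁻¹ ≤ ((1 - ε₂) ^ r * (1 - α))⁻¹ := by
          apply inv_anti₀
            (mul_pos (Real.rpow_pos_of_pos (by linarith) r) (by linarith)) hcm_ge
        have h3 : 0 ≤ (1 - ε₂) * (1 - ε₂) ^ r * (1 - α) :=
          mul_nonneg (mul_nonneg (by linarith) hP2nn') (by linarith)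
        calc (1 - ε₂) * (1 - ε₂) ^ r * (1 - α) * ((1 - ε₂) ^ r * (1 - Sm))⁻¹
            ≤ (1 - ε₂) * (1 - ε₂) ^ r * (1 - α) * ((1 - ε₂) ^ r * (1 - α))⁻¹ :=
            mul_le_mul_of_nonneg_left h2 h3
        _ = 1 - ε₂ := by
            field_simp
      have hcoef_nn : 0 ≤ γ⁻¹ * (1 - α) :=
        mul_nonneg (inv_pos.mpr hγpos).le (by linarith)
      calc γ⁻¹ * (1 - α) * lev C i
          = (γ⁻¹ * (1 - α)) * ((s i / w i) ^ r * (w i ^ c) ^ 2 * qf (Cᵀ * C)⁻¹ (A i)) := by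
            rw [hδ, hV2 i]
      _ ≤ (γ⁻¹ * (1 - α)) * ((s i / w i) ^ r * (w i ^ c) ^ 2
            * (((1 - ε₂) ^ r * (1 - Sm))⁻¹ * qf (Bᵀ * B)⁻¹ (A i))) := by
            apply mul_le_mul_of_nonneg_left _ hcoef_nn
            exact mul_le_mul_of_nonneg_left hδβ
              (mul_nonneg htr_nn (sq_nonneg _))
      _ = (γ⁻¹ * (1 - α) * ((1 - ε₂) ^ r * (1 - Sm))⁻¹)
            * ((s i / w i) ^ r * ((w i ^ c) ^ 2 * qf (Bᵀ * B)⁻¹ (A i))) := by ring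
      _ = (γ⁻¹ * (1 - α) * ((1 - ε₂) ^ r * (1 - Sm))⁻¹)
            * ((s i / w i) ^ r * lev B i) := by rw [← hσ i]
      _ ≤ (1 - ε₂) * ((s i / w i) ^ r * lev B i) :=
            mul_le_mul_of_nonneg_right keyγ (mul_nonneg htr_nn (hσnn i))
      _ = ((1 - ε₂) * lev B i) * (s i / w i) ^ r := by ring
      _ ≤ s i * (s i / w i) ^ r := mul_le_mul_of_nonneg_right (hs i).1 htr_nn
      _ = v i := hti.symm
  · -- upper bound
    have hγval : γ = ((1 - ε₂) ^ (1 + r))⁻¹ := by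
      rw [hγ, show -(p / 2) = -(1 + r) from by rw [hr_def]; ring,
        Real.rpow_neg (by linarith : (0:ℝ) ≤ 1 - ε₂)]
    have hYpos : (0:ℝ) < (1 - ε₂) ^ (1 + r) := Real.rpow_pos_of_pos (by linarith) _
    have key2 : (1 + ε₂) * ((1 + ε₂) ^ r * (1 + Sp)) ≤ γ * (1 + α) := by
      have e1 : ((1:ℝ) - ε₂) ^ (1 + r) = (1 - ε₂) * (1 - ε₂) ^ r := by
        rw [Real.rpow_add (by linarith : (0:ℝ) < 1 - ε₂), Real.rpow_one]
      have e2 : ((1:ℝ) + ε₂) ^ r * (1 - ε₂) ^ r = ((1 + ε₂) * (1 - ε₂)) ^ r := by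
        rw [← Real.mul_rpow (by linarith) (by linarith)]
      have e3 : (((1:ℝ) + ε₂) * (1 - ε₂)) ^ r ≤ 1 :=
        Real.rpow_le_one (by nlinarith) (by nlinarith) hr0
      have e4 : (((1:ℝ) + ε₂) * (1 - ε₂)) ≤ 1 := by nlinarith
      have hprod : ((1 + ε₂) * (1 + ε₂) ^ r) * ((1 - ε₂) ^ (1 + r)) ≤ 1 := by
        calc ((1 + ε₂) * (1 + ε₂) ^ r) * ((1 - ε₂) ^ (1 + r))
            = ((1 + ε₂) * (1 - ε₂)) * ((1 + ε₂) ^ r * (1 - ε₂) ^ r) := by rw [e1]; ring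
        _ = ((1 + ε₂) * (1 - ε₂)) * (((1 + ε₂) * (1 - ε₂)) ^ r) := by rw [e2]
        _ ≤ 1 * 1 := by
            apply mul_le_mul e4 e3 (Real.rpow_nonneg (by nlinarith) r) (by norm_num)
        _ = 1 := by norm_num
      have hX : (1 + ε₂) * (1 + ε₂) ^ r ≤ ((1 - ε₂) ^ (1 + r))⁻¹ := by
        rw [← one_div, le_div_iff₀ hYpos]
        exact hprod
      rw [hγval]
      have h1Sp : 1 + Sp ≤ 1 + α := by linarith [hSpα]
      calc (1 + ε₂) * ((1 + ε₂) ^ r * (1 + Sp))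
          = ((1 + ε₂) * (1 + ε₂) ^ r) * (1 + Sp) := by ring
      _ ≤ ((1 - ε₂) ^ (1 + r))⁻¹ * (1 + Sp) :=
          mul_le_mul_of_nonneg_right hX (by linarith)
      _ ≤ ((1 - ε₂) ^ (1 + r))⁻¹ * (1 + α) :=
          mul_le_mul_of_nonneg_left h1Sp (inv_pos.mpr hYpos).le
    calc v i = s i * (s i / w i) ^ r := hti
    _ ≤ ((1 + ε₂) * lev B i) * (s i / w i) ^ r :=
        mul_le_mul_of_nonneg_right (hs i).2 htr_nn
    _ = (1 + ε₂) * ((s i / w i) ^ r * ((w i ^ c) ^ 2 * qf (Bᵀ * B)⁻¹ (A i))) := by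
        rw [hσ i]; ring
    _ ≤ (1 + ε₂) * ((s i / w i) ^ r * ((w i ^ c) ^ 2
          * (((1 + ε₂) ^ r * (1 + Sp)) * qf (Cᵀ * C)⁻¹ (A i)))) := by
        apply mul_le_mul_of_nonneg_left _ (by linarith : (0:ℝ) ≤ 1 + ε₂)
        apply mul_le_mul_of_nonneg_left _ htr_nn
        exact mul_le_mul_of_nonneg_left (hβδ (A i)) (sq_nonneg _)
    _ = ((1 + ε₂) * ((1 + ε₂) ^ r * (1 + Sp)))
          * ((s i / w i) ^ r * (w i ^ c) ^ 2 * qf (Cᵀ * C)⁻¹ (A i)) := by ring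
    _ = ((1 + ε₂) * ((1 + ε₂) ^ r * (1 + Sp))) * lev C i := by rw [hδ, hV2 i]
    _ ≤ (γ * (1 + α)) * lev C i := mul_le_mul_of_nonneg_right key2 hlevCnn
    _ = γ * (1 + α) * lev C i := by ring
end
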